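/- arXiv:math/0610328 — 3 statements merged into one kernel-verified Lean document; each statement's English description precedes it below -/
import Mathlib

section
/- For every p ∈ (0,1], λ > 0 and h ∈ ℝ with h < 1 − (2d − (1 − p)) log 2 / (pλ), one has Φ_p(λ,h) > λh, i.e. the polymer is localized; in particular the localized region L_p = {(λ,h) ∈ (0,∞) × ℝ : Φ_p(λ,h) > λh} is nonempty. -/
/- A heteropolymer in a medium with random droplets (Wüthrich, Ann. Appl. Probab. 2006).

A path in `C^{k+m}_{k,x}` is encoded by its sequence of `m` increments: at each step every
one of the `d` coordinates changes by `±1`, so an increment is an element of `Fin d → Bool`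
(`true` = `+1`, `false` = `-1`).  The uniform measure on paths corresponds to the uniform
measure on step sequences, so expectations under `P^{k+m}_{k,x}` are normalized sums over
all step sequences. -/

open MeasureTheory Filter Real

namespace Hetero

variable (d : ℕ)

/-- Step sequences of length `m`. -/
abbrev Steps (m : ℕ) := Fin m → Fin d → Bool

/-- Position (in `ℤ^d`) after `j` steps of the walk started at `x`. -/
def pos (x : Fin d → ℤ) {m : ℕ} (s : Steps d m) (j : ℕ) : Fin d → ℤ :=
  fun c => x c + ∑ i ∈ Finset.range j,
    (if hi : i < m then (if s ⟨i, hi⟩ c then 1 else -1) else 0)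

/-- `Δ_η(S_i)`: `-1` if the walk is at the origin (of `ℤ^d`) and there is a droplet there
(`η_i = 1`), and `+1` otherwise. -/
noncomputable def del (et : ℤ → ℝ) (t : ℤ) (y : Fin d → ℤ) : ℝ :=
  if y = 0 ∧ et t = 1 then -1 else 1

/-- Energy `λ ∑_{i=k+1}^{k+m} Δ_η(S_i)(ω_i + h)` of the polymer started at time `k`
at site `x`, performing the `m` steps `s`. -/
noncomputable def ham (lam h : ℝ) (om et : ℤ → ℝ) (k : ℤ) (x : Fin d → ℤ) {m : ℕ}
    (s : Steps d m) : ℝ :=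
  lam * ∑ j ∈ Finset.Icc 1 m, del d et (k + (j : ℤ)) (pos d x s j) * (om (k + (j : ℤ)) + h)

/-- Partition sum `Z^{k+m}_{k,x}(ω,η)`. -/
noncomputable def Z (lam h : ℝ) (om et : ℤ → ℝ) (k : ℤ) (x : Fin d → ℤ) (m : ℕ) : ℝ :=
  (∑ s : Steps d m, Real.exp (ham d lam h om et k x s)) / 2 ^ (d * m)

/-- Restricted partition sum `Ẑ^{k+m}_{k,x}(ω,η)` (only paths ending at the origin). -/
noncomputable def Zhat (lam h : ℝ) (om et : ℤ → ℝ) (k : ℤ) (x : Fin d → ℤ) (m : ℕ) : ℝ :=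
  (∑ s : Steps d m, Set.indicator {s : Steps d m | pos d x s m = 0}
      (fun s => Real.exp (ham d lam h om et k x s)) s) / 2 ^ (d * m)

/-- `Ψ^{k+m}_{k,x}(ω,η) = E^{k+m}_{k,x}[exp{λ ∑ (Δ_η(S_i) - 1)(ω_i + h)}]`. -/
noncomputable def Psi (lam h : ℝ) (om et : ℤ → ℝ) (k : ℤ) (x : Fin d → ℤ) (m : ℕ) : ℝ :=
  (∑ s : Steps d m, Real.exp (lam * ∑ j ∈ Finset.Icc 1 m,
      (del d et (k + (j : ℤ)) (pos d x s j) - 1) * (om (k + (j : ℤ)) + h))) / 2 ^ (d * m)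

/-- Quenched polymer probability `Q^{k+m}_{k,x}[A](ω,η)` of a path event `A`. -/
noncomputable def Qprob (lam h : ℝ) (om et : ℤ → ℝ) (k : ℤ) (x : Fin d → ℤ) (m : ℕ)
    (A : Set (Steps d m)) : ℝ :=
  (∑ s : Steps d m, Set.indicator A (fun s => Real.exp (ham d lam h om et k x s)) s) /
    (∑ s : Steps d m, Real.exp (ham d lam h om et k x s))

/-- Simple-random-walk probability `P^{k+m}_{k,x}[A]` of a path event `A` (it does not
depend on `k` and `x`, which only shift the path). -/
noncomputable def Pprob (m : ℕ) (A : Set (Steps d m)) : ℝ :=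
  (∑ s : Steps d m, Set.indicator A (fun _ => (1 : ℝ)) s) / 2 ^ (d * m)

/-- Probability that the `m`-step walk started at the origin does not revisit the origin. -/
noncomputable def noReturn (m : ℕ) : ℝ :=
  Pprob d m {s : Steps d m | ∀ i, 1 ≤ i → i ≤ m → pos d 0 s i ≠ 0}

/-- `α(d) = P^∞_{0,0}[w(i) ≠ 0 for all i ≥ 1]`: the probability that the walk never
returns to the origin.  By continuity from above it is the (decreasing) limit, i.e. the
infimum, of the finite-horizon no-return probabilities. -/
noncomputable def alpha : ℝ := ⨅ m : ℕ, noReturn d m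

/-- `N_m`: number of returns of the walk (started at the origin) to the origin in `(0, m]`. -/
def Nret (m : ℕ) (s : Steps d m) : ℕ :=
  ((Finset.Icc 1 m).filter (fun i => pos d 0 s i = 0)).card

/-- Euclidean norm of a point of `ℤ^d`. -/
noncomputable def nrm (x : Fin d → ℤ) : ℝ := Real.sqrt (∑ c, ((x c : ℝ)) ^ 2)

end Hetero

/-! For each environment, steer the walk so that at the even time `2k` it sits at the origin
exactly when a droplet meets a negative charge there (`η_{2k} = 1`, `ω_{2k} = -1`), and at `2e₀`
otherwise; by parity it is never at the origin at odd times. Such a path earns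
`λ ∑ (ω_i + h)` plus the reward `2λ(1 - h)` at each of the `N_r` favourable times up to `2r`, and
these paths form a fraction at least `2^{-(dr + 1 + 2N_r)}` of all paths of length `2r`, so
`log Z_{2r} ≥ λ ∑ (ω_i + h) + (2λ(1 - h) - 2 log 2) N_r - (dr + 1) log 2`.
Taking expectations (`E ω_i = 0`, `E N_r = rp/2`), dividing by `2r` and passing to the limit by
dominated convergence gives `Φ ≥ λh + (p/2)(λ(1 - h) - log 2) - (d/2) log 2 > λh`. -/

namespace Hetero

open Finset Topology

variable {d : ℕ}

section Walk

lemma pos_zero (x : Fin d → ℤ) {m : ℕ} (s : Steps d m) : pos d x s 0 = x := by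
  funext c; simp [pos]

lemma pos_succ (x : Fin d → ℤ) {m : ℕ} (s : Steps d m) {j : ℕ} (hj : j < m) (c : Fin d) :
    pos d x s (j + 1) c = pos d x s j c + if s ⟨j, hj⟩ c then 1 else -1 := by
  simp only [pos, sum_range_succ, dif_pos hj]
  ring

lemma even_pos_sub {m : ℕ} (s : Steps d m) {t : ℕ} (ht : t ≤ m) (c : Fin d) :
    Even (pos d 0 s t c - t) := by
  induction t with
  | zero => simp [pos_zero]
  | succ n ih =>
    obtain ⟨k, hk⟩ := ih (by omega)
    rw [pos_succ 0 s (by omega : n < m) c]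
    split
    · exact ⟨k, by push_cast; linarith⟩
    · exact ⟨k - 1, by push_cast; linarith⟩

lemma pos_ne_zero_of_odd (hd : 1 ≤ d) {m : ℕ} (s : Steps d m) {t : ℕ} (ht : t ≤ m)
    (hodd : Odd t) : pos d 0 s t ≠ 0 := by
  intro h0
  have := even_pos_sub s ht ⟨0, hd⟩
  rw [h0, Pi.zero_apply, zero_sub, even_neg, Int.even_coe_nat] at this
  exact Nat.not_even_iff_odd.mpr hodd this

end Walk

section Strategy

def twoE0 (d : ℕ) : Fin d → ℤ := fun c => if c.val = 0 then 2 else 0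

lemma twoE0_ne_zero (hd : 1 ≤ d) : twoE0 d ≠ 0 := by
  intro h
  simpa [twoE0] using congrFun h ⟨0, hd⟩

/-- The walk through `z 0, z 1, …` at the even times, for `z` with values in `{0, 2e₀}`.
A double step between `0` and `2e₀` forces both steps of coordinate `0`; every other coordinate
takes the free step `a j c` and then reverses it. -/
def follow (z : ℕ → Fin d → ℤ) (r : ℕ) (a : Fin r → Fin d → Bool) : Steps d (2 * r) :=
  fun i c =>
    if c.val = 0 ∧ z (i / 2) ≠ z (i / 2 + 1) then decide (z (i / 2 + 1) ≠ 0)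
    else if i.val % 2 = 0 then a ⟨i / 2, by omega⟩ c else !a ⟨i / 2, by omega⟩ c

variable {z : ℕ → Fin d → ℤ} {r : ℕ}

lemma follow_two_mul (a : Fin r → Fin d → Bool) {k : ℕ} (hk : k < r) (c : Fin d) :
    follow z r a ⟨2 * k, by omega⟩ c =
      if c.val = 0 ∧ z k ≠ z (k + 1) then decide (z (k + 1) ≠ 0) else a ⟨k, hk⟩ c := by
  have hk2 : 2 * k / 2 = k := by omega
  simp only [follow, hk2, Nat.mul_mod_right, if_true]

lemma follow_two_mul_add_one (a : Fin r → Fin d → Bool) {k : ℕ} (hk : k < r) (c : Fin d) :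
    follow z r a ⟨2 * k + 1, by omega⟩ c =
      if c.val = 0 ∧ z k ≠ z (k + 1) then decide (z (k + 1) ≠ 0) else !a ⟨k, hk⟩ c := by
  have hk2 : (2 * k + 1) / 2 = k := by omega
  have hk3 : (2 * k + 1) % 2 = 1 := by omega
  simp only [follow, hk2, hk3, one_ne_zero, if_false]

lemma pos_follow (hz : ∀ k, z k = 0 ∨ z k = twoE0 d) (hz0 : z 0 = 0)
    (a : Fin r → Fin d → Bool) {k : ℕ} (hk : k ≤ r) :
    pos d 0 (follow z r a) (2 * k) = z k := by
  induction k with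
  | zero => rw [pos_zero, hz0]
  | succ k ih =>
    funext c
    rw [show 2 * (k + 1) = 2 * k + 1 + 1 by ring, pos_succ 0 _ (by omega : 2 * k + 1 < 2 * r),
      pos_succ 0 _ (by omega : 2 * k < 2 * r), ih (by omega), follow_two_mul a (by omega),
      follow_two_mul_add_one a (by omega)]
    by_cases hc : c.val = 0 ∧ z k ≠ z (k + 1)
    · have hne : twoE0 d ≠ 0 := fun h0 => by
        rcases hz k with h | h <;> rcases hz (k + 1) with h' | h' <;> simp_all
      rw [if_pos hc, if_pos hc]
      rcases hz k with h | h <;> rcases hz (k + 1) with h' | h' <;> simp_all [twoE0]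
    · have hzc : z k c = z (k + 1) c := by
        by_cases hc0 : c.val = 0
        · rw [not_not.mp fun hne => hc ⟨hc0, hne⟩]
        · rcases hz k with h | h <;> rcases hz (k + 1) with h' | h' <;> simp [h, h', twoE0, hc0]
      rw [if_neg hc, if_neg hc, hzc]
      cases a ⟨k, by omega⟩ c <;> simp

/-- `follow z r` forgets only the free bits of coordinate `0` on the double steps where `z`
changes. -/
lemma two_pow_le_mul_card_image_follow (hd : 1 ≤ d) (z : ℕ → Fin d → ℤ) (r : ℕ) :
    2 ^ (d * r) ≤ 2 ^ #{j : Fin r | z j ≠ z (j + 1)} * #(univ.image (follow z r)) := by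
  have hcard : #(univ : Finset (Fin r → Fin d → Bool)) = 2 ^ (d * r) := by
    simp [← pow_mul]
  rw [← hcard]
  refine card_le_mul_card_image _ _ fun s _ => ?_
  calc #{a | follow z r a = s}
      ≤ #(univ : Finset ({j : Fin r // z j ≠ z (j + 1)} → Bool)) := by
        refine card_le_card_of_injOn (fun a j => a j.1 ⟨0, hd⟩)
          (fun _ _ => mem_coe.2 (mem_univ _)) fun a ha b hb hab => ?_
        simp only [coe_filter, mem_univ, true_and, Set.mem_ofPred_eq] at ha hb
        funext j c
        by_cases hc : c.val = 0 ∧ z j ≠ z (j + 1)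
        · rw [show c = ⟨0, hd⟩ from Fin.ext hc.1]
          exact congrFun hab ⟨j, hc.2⟩
        · have := congrFun (congrFun (ha.trans hb.symm) ⟨2 * j, by omega⟩) c
          rwa [follow_two_mul a j.2, follow_two_mul b j.2, if_neg hc, if_neg hc] at this
    _ = 2 ^ #{j : Fin r | z j ≠ z (j + 1)} := by simp [Fintype.card_subtype]

def target (d : ℕ) (B : ℕ → Prop) [DecidablePred B] (k : ℕ) : Fin d → ℤ :=
  if k = 0 ∨ B k then 0 else twoE0 d

variable (B : ℕ → Prop) [DecidablePred B]

lemma target_eq_zero_or (k : ℕ) : target d B k = 0 ∨ target d B k = twoE0 d := by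
  unfold target; split <;> simp

lemma target_zero : target d B 0 = 0 := if_pos (Or.inl rfl)

lemma card_target_ne_succ_le (r : ℕ) :
    #{j : Fin r | target d B j ≠ target d B (j + 1)} ≤ 1 + 2 * #{k ∈ Icc 1 r | B k} := by
  set S := {k ∈ Icc 1 r | B k}
  calc #{j : Fin r | target d B j ≠ target d B (j + 1)}
      ≤ #({0} ∪ S ∪ S.image (· - 1)) := by
        refine card_le_card_of_injOn Fin.val (fun j hj => ?_) Fin.val_injective.injOn
        simp only [coe_filter, mem_univ, true_and, Set.mem_ofPred_eq] at hj
        have hjr := j.2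
        simp only [coe_union, coe_singleton, coe_image, coe_filter, mem_Icc, Set.mem_union,
          Set.mem_singleton_iff, Set.mem_ofPred_eq, Set.mem_image, S]
        by_cases hj0 : j.val = 0
        · exact Or.inl (Or.inl hj0)
        by_cases hBj : B j
        · exact Or.inl (Or.inr ⟨⟨by omega, by omega⟩, hBj⟩)
        by_cases hBj' : B (j + 1)
        · exact Or.inr ⟨j + 1, ⟨⟨by omega, by omega⟩, hBj'⟩, by omega⟩
        · exact absurd (by simp [target, hj0, hBj, hBj']) hj
    _ ≤ 1 + #S + #S := by
        grw [card_union_le, card_union_le, card_singleton, card_image_le]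
    _ = 1 + 2 * #S := by ring

end Strategy

section Energy

lemma sum_Icc_one_two_mul {M : Type*} [AddCommMonoid M] (f : ℕ → M) (r : ℕ) :
    ∑ j ∈ Icc 1 (2 * r), f j = ∑ k ∈ Icc 1 r, (f (2 * k - 1) + f (2 * k)) := by
  induction r with
  | zero => simp
  | succ r ih =>
    rw [sum_Icc_succ_top (by omega), ← ih, show 2 * (r + 1) = 2 * r + 1 + 1 by ring,
      sum_Icc_succ_top (by omega), sum_Icc_succ_top (by omega), add_assoc]
    congr 3

/-- The even times at which a visit to the origin pays: a droplet meets a negative charge. -/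
def Favourable (w e : ℤ → ℝ) (k : ℕ) : Prop := e (2 * k) = 1 ∧ w (2 * k) = -1

noncomputable instance (w e : ℤ → ℝ) : DecidablePred (Favourable w e) :=
  fun _ => inferInstanceAs (Decidable (_ ∧ _))

lemma ham_eq_of_pos_two_mul_eq_target (hd : 1 ≤ d) (lam h : ℝ) (w e : ℤ → ℝ) {r : ℕ}
    (s : Steps d (2 * r)) (hs : ∀ k ≤ r, pos d 0 s (2 * k) = target d (Favourable w e) k) :
    ham d lam h w e 0 0 s = lam * (∑ i ∈ Icc 1 (2 * r), (w i + h)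
      + 2 * (1 - h) * #{k ∈ Icc 1 r | Favourable w e k}) := by
  unfold ham
  simp only [zero_add]
  congr 1
  rw [sum_Icc_one_two_mul, sum_Icc_one_two_mul, natCast_card_filter, mul_sum,
    ← sum_add_distrib]
  refine sum_congr rfl fun k hk => ?_
  obtain ⟨hk1, hkr⟩ := mem_Icc.mp hk
  have hodd : del d e ↑(2 * k - 1) (pos d 0 s (2 * k - 1)) = 1 :=
    if_neg fun h0 => pos_ne_zero_of_odd hd s (by omega) ⟨k - 1, by omega⟩ h0.1
  have hcast : ((2 * k : ℕ) : ℤ) = 2 * (k : ℤ) := by push_cast; ring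
  rw [hodd, hs k hkr, hcast]
  by_cases hB : Favourable w e k
  · rw [target, if_pos (Or.inr hB), del, if_pos ⟨rfl, hB.1⟩, hB.2, if_pos hB]
    ring
  · simp [del, target, hB, twoE0_ne_zero hd, show k ≠ 0 by omega]

lemma exp_sub_nat_mul_log_two (x : ℝ) (n : ℕ) : exp (x - n * log 2) = exp x / 2 ^ n := by
  rw [exp_sub, exp_nat_mul, exp_log two_pos]

/-- Of the `2dr` bits of a path of length `2r`, following the target of the favourable times
fixes at most `dr + 1 + 2N`. -/
lemma log_Z_two_mul_ge (hd : 1 ≤ d) (lam h : ℝ) (w e : ℤ → ℝ) (r : ℕ) :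
    lam * (∑ i ∈ Icc 1 (2 * r), (w i + h) + 2 * (1 - h) * #{k ∈ Icc 1 r | Favourable w e k})
      - (d * r + 1 + 2 * #{k ∈ Icc 1 r | Favourable w e k} : ℕ) * log 2
      ≤ log (Z d lam h w e 0 0 (2 * r)) := by
  set N := #{k ∈ Icc 1 r | Favourable w e k}
  set E := lam * (∑ i ∈ Icc 1 (2 * r), (w i + h) + 2 * (1 - h) * N)
  set S := univ.image (follow (target d (Favourable w e)) r)
  set total := ∑ s : Steps d (2 * r), exp (ham d lam h w e 0 0 s)
  have hE : ∀ s ∈ S, ham d lam h w e 0 0 s = E := by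
    intro s hs
    obtain ⟨a, -, rfl⟩ := mem_image.mp hs
    exact ham_eq_of_pos_two_mul_eq_target hd lam h w e _ fun k hk =>
      pos_follow (target_eq_zero_or _) (target_zero _) a hk
  have hS : 2 ^ (d * r) ≤ 2 ^ (1 + 2 * N) * #S :=
    (two_pow_le_mul_card_image_follow hd _ r).trans <| Nat.mul_le_mul_right _ <|
      Nat.pow_le_pow_right two_pos (card_target_ne_succ_le _ r)
  have hsum : #S * exp E ≤ total := by
    calc #S * exp E = ∑ s ∈ S, exp (ham d lam h w e 0 0 s) := by
          rw [sum_congr rfl fun s hs => by rw [hE s hs], sum_const, nsmul_eq_mul]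
      _ ≤ _ := sum_le_sum_of_subset_of_nonneg (subset_univ _) fun _ _ _ => (exp_pos _).le
  have hZ : exp E / 2 ^ (d * r + 1 + 2 * N) ≤ Z d lam h w e 0 0 (2 * r) := by
    have hS' : (2 : ℝ) ^ (d * r) ≤ 2 ^ (1 + 2 * N) * #S := by exact_mod_cast hS
    unfold Z
    rw [div_le_div_iff₀ (by positivity) (by positivity),
      show d * (2 * r) = d * r + d * r by ring, pow_add,
      show d * r + 1 + 2 * N = d * r + (1 + 2 * N) by ring, pow_add]
    calc exp E * (2 ^ (d * r) * 2 ^ (d * r))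
        ≤ exp E * (2 ^ (d * r) * (2 ^ (1 + 2 * N) * #S)) := by gcongr
      _ = 2 ^ (d * r) * 2 ^ (1 + 2 * N) * (#S * exp E) := by ring
      _ ≤ 2 ^ (d * r) * 2 ^ (1 + 2 * N) * total := by gcongr
      _ = total * (2 ^ (d * r) * 2 ^ (1 + 2 * N)) := by ring
  rw [le_log_iff_exp_le (lt_of_lt_of_le (by positivity) hZ), exp_sub_nat_mul_log_two]
  exact hZ

lemma abs_log_sum_exp_div_card_le {ι : Type*} [Fintype ι] [Nonempty ι] (f : ι → ℝ) {b : ℝ}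
    (hf : ∀ i, |f i| ≤ b) : |log ((∑ i, exp (f i)) / Fintype.card ι)| ≤ b := by
  have hcard : (0 : ℝ) < Fintype.card ι := by exact_mod_cast Fintype.card_pos
  have hlow : exp (-b) ≤ (∑ i, exp (f i)) / Fintype.card ι := by
    rw [le_div_iff₀ hcard, mul_comm, ← nsmul_eq_mul]
    exact card_nsmul_le_sum _ _ _ fun i _ => exp_le_exp.mpr (neg_le_of_abs_le (hf i))
  have hup : (∑ i, exp (f i)) / Fintype.card ι ≤ exp b := by
    rw [div_le_iff₀ hcard, mul_comm, ← nsmul_eq_mul]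
    exact sum_le_card_nsmul _ _ _ fun i _ => exp_le_exp.mpr (le_of_abs_le (hf i))
  have hpos := lt_of_lt_of_le (exp_pos _) hlow
  rw [abs_le, le_log_iff_exp_le hpos, log_le_iff_le_exp hpos]
  exact ⟨hlow, hup⟩

lemma abs_le_one_of_sign {x : ℝ} (hx : x = 1 ∨ x = -1) : |x| ≤ 1 := by
  rcases hx with rfl | rfl <;> simp

lemma abs_ham_le {lam : ℝ} (hlam : 0 ≤ lam) (h : ℝ) {w : ℤ → ℝ} (hw : ∀ i, |w i| ≤ 1)
    (e : ℤ → ℝ) (k : ℤ) (x : Fin d → ℤ) {n : ℕ} (s : Steps d n) :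
    |ham d lam h w e k x s| ≤ n * (lam * (1 + |h|)) := by
  unfold ham
  rw [abs_mul, abs_of_nonneg hlam, mul_left_comm]
  gcongr
  calc |∑ j ∈ Icc 1 n, del d e (k + j) (pos d x s j) * (w (k + j) + h)|
      ≤ ∑ j ∈ Icc 1 n, |del d e (k + j) (pos d x s j) * (w (k + j) + h)| :=
        abs_sum_le_sum_abs _ _
    _ ≤ ∑ j ∈ Icc 1 n, (1 + |h|) := by
        refine sum_le_sum fun j _ => ?_
        have hdel : |del d e (k + j) (pos d x s j)| = 1 := by unfold del; split <;> simp
        rw [abs_mul, hdel, one_mul]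
        exact (abs_add_le _ _).trans (by gcongr; exact hw _)
    _ = n * (1 + |h|) := by rw [sum_const, Nat.card_Icc, nsmul_eq_mul, Nat.add_sub_cancel]

lemma abs_log_Z_le {lam : ℝ} (hlam : 0 ≤ lam) (h : ℝ) {w : ℤ → ℝ} (hw : ∀ i, |w i| ≤ 1)
    (e : ℤ → ℝ) (k : ℤ) (x : Fin d → ℤ) (n : ℕ) :
    |log (Z d lam h w e k x n)| ≤ n * (lam * (1 + |h|)) := by
  have hcard : (2 : ℝ) ^ (d * n) = Fintype.card (Steps d n) := by
    simp [← pow_mul]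
  rw [Z, hcard]
  exact abs_log_sum_exp_div_card_le _ fun s => abs_ham_le hlam h hw e k x s

end Energy

section Environment

variable {Ω : Type*} [MeasurableSpace Ω] {μ : Measure Ω} [IsProbabilityMeasure μ]

lemma measurable_log_Z (lam h : ℝ) {om et : ℤ → Ω → ℝ} (hom : ∀ i, Measurable (om i))
    (het : ∀ i, Measurable (et i)) (k : ℤ) (x : Fin d → ℤ) (n : ℕ) :
    Measurable fun a => log (Z d lam h (om · a) (et · a) k x n) := by
  refine measurable_log.comp (Measurable.div_const (Finset.measurable_sum _ fun s _ => ?_) _)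
  refine measurable_exp.comp ((Finset.measurable_sum _ fun j _ => ?_).const_mul lam)
  refine (Measurable.ite ?_ measurable_const measurable_const).mul ((hom _).add_const h)
  exact (MeasurableSet.const _).inter (het _ (measurableSet_singleton 1))
lemma integral_eq_zero_of_sign {X : Ω → ℝ} (hX : Measurable X) (hval : ∀ a, X a = 1 ∨ X a = -1)
    (hhalf : μ {a | X a = 1} = ENNReal.ofReal (1 / 2)) : ∫ a, X a ∂μ = 0 := by
  have hs : MeasurableSet {a | X a = 1} := hX (measurableSet_singleton 1)
  have hX : X = fun a => 2 * Set.indicator {a | X a = 1} 1 a - 1 := by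
    funext a
    rcases hval a with h | h <;> norm_num [Set.indicator_apply, h]
  rw [hX, integral_sub ((integrable_const 1).indicator hs |>.const_mul 2) (integrable_const 1),
    integral_const_mul, integral_indicator_one hs, measureReal_def, hhalf]
  norm_num

lemma measure_eq_neg_one_of_sign {X : Ω → ℝ} (hX : Measurable X)
    (hval : ∀ a, X a = 1 ∨ X a = -1) (hhalf : μ {a | X a = 1} = ENNReal.ofReal (1 / 2)) :
    μ {a | X a = -1} = ENNReal.ofReal (1 / 2) := by
  have hc : {a | X a = -1} = {a | X a = 1}ᶜ := by
    ext a
    rcases hval a with h | h <;> norm_num [h]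
  have hs : MeasurableSet {a | X a = 1} := hX (measurableSet_singleton 1)
  rw [hc, prob_compl_eq_one_sub hs, hhalf,
    ← ENNReal.ofReal_one, ← ENNReal.ofReal_sub _ (by norm_num)]
  norm_num

lemma measure_droplet_inter_neg_charge {om et : ℤ → Ω → ℝ} (hom_meas : ∀ i, Measurable (om i))
    (hom_val : ∀ i a, om i a = 1 ∨ om i a = -1)
    (hom_dist : ∀ i, μ {a | om i a = 1} = ENNReal.ofReal (1 / 2)) {p : ℝ} (hp : 0 ≤ p)
    (het_dist : ∀ i, μ {a | et i a = 1} = ENNReal.ofReal p)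
    (hindep : ProbabilityTheory.iIndepFun (Sum.elim om et) μ) (t : ℤ) :
    μ {a | et t a = 1 ∧ om t a = -1} = ENNReal.ofReal (p / 2) := by
  have hmul := (hindep.indepFun (show Sum.inr t ≠ Sum.inl t by simp)).measure_inter_preimage_eq_mul
    _ _ (measurableSet_singleton 1) (measurableSet_singleton (-1))
  calc μ {a | et t a = 1 ∧ om t a = -1} = μ (et t ⁻¹' {1}) * μ (om t ⁻¹' {-1}) := hmul
    _ = ENNReal.ofReal p * ENNReal.ofReal (1 / 2) :=
      congr_arg₂ _ (het_dist t) (measure_eq_neg_one_of_sign (hom_meas t) (hom_val t) (hom_dist t))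
    _ = ENNReal.ofReal (p / 2) := by rw [← ENNReal.ofReal_mul hp, mul_one_div]

lemma integral_card_favourable {om et : ℤ → Ω → ℝ} (hom_meas : ∀ i, Measurable (om i))
    (het_meas : ∀ i, Measurable (et i)) {p : ℝ} (hp : 0 ≤ p)
    (hfav : ∀ t, μ {a | et t a = 1 ∧ om t a = -1} = ENNReal.ofReal (p / 2)) (r : ℕ) :
    Integrable (fun a => (#{k ∈ Icc 1 r | Favourable (om · a) (et · a) k} : ℝ)) μ ∧
    ∫ a, (#{k ∈ Icc 1 r | Favourable (om · a) (et · a) k} : ℝ) ∂μ = r * (p / 2) := by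
  set F : ℕ → Set Ω := fun k => {a | et (2 * k) a = 1 ∧ om (2 * k) a = -1}
  have hF : ∀ k, MeasurableSet (F k) := fun k =>
    (het_meas _ (measurableSet_singleton 1)).inter (hom_meas _ (measurableSet_singleton (-1)))
  have hsum : (fun a => (#{k ∈ Icc 1 r | Favourable (om · a) (et · a) k} : ℝ))
      = fun a => ∑ k ∈ Icc 1 r, (F k).indicator 1 a := by
    funext a
    rw [natCast_card_filter]
    exact sum_congr rfl fun k _ => by rw [Set.indicator_apply]; exact if_congr Iff.rfl rfl rfl
  rw [hsum]
  refine ⟨integrable_finsetSum _ fun k _ => (integrable_const 1).indicator (hF k), ?_⟩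
  rw [integral_finsetSum _ fun k _ => (integrable_const 1).indicator (hF k)]
  simp_rw [integral_indicator_one (hF _), measureReal_def, F, hfav,
    ENNReal.toReal_ofReal (by positivity : 0 ≤ p / 2), sum_const, Nat.card_Icc, nsmul_eq_mul,
    Nat.add_sub_cancel]

lemma integral_log_Z_two_mul_ge (hd : 1 ≤ d) {lam : ℝ} (hlam : 0 ≤ lam) (h : ℝ)
    {om et : ℤ → Ω → ℝ} (hom_meas : ∀ i, Measurable (om i)) (het_meas : ∀ i, Measurable (et i))
    (hom_val : ∀ i a, om i a = 1 ∨ om i a = -1)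
    (hom_dist : ∀ i, μ {a | om i a = 1} = ENNReal.ofReal (1 / 2)) {p : ℝ} (hp : 0 ≤ p)
    (hfav : ∀ t, μ {a | et t a = 1 ∧ om t a = -1} = ENNReal.ofReal (p / 2)) (r : ℕ) :
    lam * (2 * r * h) + (2 * lam * (1 - h) - 2 * log 2) * (r * (p / 2)) - (d * r + 1) * log 2
      ≤ ∫ a, log (Z d lam h (om · a) (et · a) 0 0 (2 * r)) ∂μ := by
  obtain ⟨hN_int, hN⟩ := integral_card_favourable (μ := μ) hom_meas het_meas hp hfav r
  set N := fun a => (#{k ∈ Icc 1 r | Favourable (om · a) (et · a) k} : ℝ)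
  set W := fun a => ∑ i ∈ Icc 1 (2 * r), om i a
  have hom_int : ∀ i, Integrable (om i) μ := fun i =>
    (integrable_const 1).mono' (hom_meas i).aestronglyMeasurable <| .of_forall fun a =>
      abs_le_one_of_sign (hom_val i a)
  have hW_int : Integrable W μ := integrable_finsetSum _ fun i _ => hom_int i
  have hW : ∫ a, W a ∂μ = 0 := by
    rw [integral_finsetSum (f := fun (i : ℕ) => om i) _ fun i _ => hom_int i]
    exact sum_eq_zero fun i _ =>
      integral_eq_zero_of_sign (hom_meas i) (hom_val i) (hom_dist i)
  have hlogZ_int : Integrable (fun a => log (Z d lam h (om · a) (et · a) 0 0 (2 * r))) μ :=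
    (integrable_const ((2 * r : ℕ) * (lam * (1 + |h|)))).mono'
      (measurable_log_Z lam h hom_meas het_meas 0 0 _).aestronglyMeasurable <|
      .of_forall fun a => by
        simpa using abs_log_Z_le hlam h (fun i => abs_le_one_of_sign (hom_val i a)) _ 0 0 (2 * r)
  have hpt : ∀ a, lam * (2 * r * h) - (d * r + 1) * log 2 + lam * W a
      + (2 * lam * (1 - h) - 2 * log 2) * N a
      ≤ log (Z d lam h (om · a) (et · a) 0 0 (2 * r)) := fun a => by
    have := log_Z_two_mul_ge hd lam h (om · a) (et · a) r
    rw [sum_add_distrib, sum_const, Nat.card_Icc, nsmul_eq_mul] at this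
    push_cast at this
    linarith
  have hG_int : Integrable (fun a => lam * (2 * r * h) - (d * r + 1) * log 2 + lam * W a) μ :=
    (integrable_const _).add (hW_int.const_mul _)
  calc _ = ∫ a, (lam * (2 * r * h) - (d * r + 1) * log 2 + lam * W a
        + (2 * lam * (1 - h) - 2 * log 2) * N a) ∂μ := by
        rw [integral_add hG_int (hN_int.const_mul _),
          integral_add (integrable_const _) (hW_int.const_mul _), integral_const_mul,
          integral_const_mul, hW, hN, integral_const, probReal_univ, one_smul]
        ring
    _ ≤ _ := integral_mono (hG_int.add (hN_int.const_mul _)) hlogZ_int hpt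

lemma tendsto_integral_div_of_abs_le {F : ℕ → Ω → ℝ} {C Φ : ℝ} (hC : 0 ≤ C)
    (hF : ∀ n, AEStronglyMeasurable (F n) μ) (hbound : ∀ n a, |F n a| ≤ n * C)
    (hlim : ∀ᵐ a ∂μ, Tendsto (fun n : ℕ => (1 / n : ℝ) * F n a) atTop (𝓝 Φ)) :
    Tendsto (fun n : ℕ => (1 / n : ℝ) * ∫ a, F n a ∂μ) atTop (𝓝 Φ) := by
  have hbound' : ∀ (n : ℕ) a, ‖(1 / n : ℝ) * F n a‖ ≤ C := fun n a => by
    rw [norm_mul, Real.norm_eq_abs, Real.norm_eq_abs, abs_of_nonneg (by positivity)]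
    rcases n.eq_zero_or_pos with rfl | hn
    · simpa using hC
    · calc (1 / n : ℝ) * |F n a| ≤ 1 / n * (n * C) := by gcongr; exact hbound n a
        _ = C := by field_simp
  simpa [integral_const_mul] using tendsto_integral_of_dominated_convergence (fun _ => C)
    (fun n => (hF n).const_mul _) (integrable_const C)
    (fun n => .of_forall (hbound' n)) hlim

end Environment

lemma le_of_tendsto_of_forall_sub_div_le {u : ℕ → ℝ} {Φ L c : ℝ}
    (hu : Tendsto u atTop (𝓝 Φ)) (h : ∀ r ≥ 1, L - c / r ≤ u r) : L ≤ Φ := by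
  have hc : Tendsto (fun r : ℕ => L - c / r) atTop (𝓝 L) := by
    simpa using tendsto_const_nhds.sub (tendsto_const_div_atTop_nhds_zero_nat c)
  exact le_of_tendsto_of_tendsto hc hu (eventually_atTop.mpr ⟨1, h⟩)

theorem localized_region_nonempty_general
    (d : ℕ) (hd : 1 ≤ d) (lam h p : ℝ) (hlam : 0 < lam)
    (hp : p ∈ Set.Ioc (0:ℝ) 1)
    (hh : h < 1 - (2 * d - (1 - p)) * Real.log 2 / (p * lam))
    {Ω : Type*} [MeasurableSpace Ω] (μ : MeasureTheory.Measure Ω) [MeasureTheory.IsProbabilityMeasure μ]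
    (om et : ℤ → Ω → ℝ)
    (hom_meas : ∀ i, Measurable (om i)) (het_meas : ∀ i, Measurable (et i))
    (hom_val : ∀ i a, om i a = 1 ∨ om i a = -1)
    (hom_dist : ∀ i, μ {a | om i a = 1} = ENNReal.ofReal (1/2))
    (het_dist : ∀ i, μ {a | et i a = 1} = ENNReal.ofReal p)
    (hindep : ProbabilityTheory.iIndepFun
      (Sum.elim om et) μ)
    (Φ : ℝ)
    (hΦ : ∀ᵐ a ∂μ, Tendsto
      (fun n : ℕ => (1 / n : ℝ) * Real.log (Z d lam h (fun i => om i a) (fun i => et i a) 0 0 n))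
      atTop (nhds Φ)) :
    lam * h < Φ := by
  have hfav := measure_droplet_inter_neg_charge hom_meas hom_val hom_dist hp.1.le het_dist hindep
  have hlim := tendsto_integral_div_of_abs_le (by positivity : 0 ≤ lam * (1 + |h|))
    (fun n => (measurable_log_Z lam h hom_meas het_meas 0 0 n).aestronglyMeasurable)
    (fun n a => abs_log_Z_le hlam.le h (fun i => abs_le_one_of_sign (hom_val i a)) _ 0 0 n) hΦ
  have hL : lam * h + (lam * (1 - h) - log 2) * (p / 2) - d / 2 * log 2 ≤ Φ := by
    refine le_of_tendsto_of_forall_sub_div_le (c := log 2 / 2)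
      (hlim.comp (tendsto_id.const_mul_atTop' two_pos)) fun r hr => ?_
    have hr : (0 : ℝ) < r := by exact_mod_cast hr
    calc _ = 1 / ((2 * r : ℕ) : ℝ) * (lam * (2 * r * h) + (2 * lam * (1 - h) - 2 * log 2)
          * (r * (p / 2)) - (d * r + 1) * log 2) := by
          push_cast
          field_simp
          ring
      _ ≤ _ := by
          refine mul_le_mul_of_nonneg_left ?_ (by positivity)
          exact integral_log_Z_two_mul_ge hd hlam.le h hom_meas het_meas hom_val hom_dist
            hp.1.le hfav r
  have hkey : (2 * d - (1 - p)) * log 2 < (1 - h) * (p * lam) := by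
    rwa [lt_sub_iff_add_lt, ← lt_sub_iff_add_lt', div_lt_iff₀ (mul_pos hp.1 hlam)] at hh
  have hd' : (1 : ℝ) ≤ d := by exact_mod_cast hd
  nlinarith [log_pos one_lt_two]

/-- **Lemma 2.3 (localized part).** For every `p ∈ (0,1]`, `λ > 0` and
`h < 1 - (2d - (1-p)) log 2 / (pλ)`, one has `Φ_p(λ,h) > λh` (localization); in
particular the localized region is nonempty.  Here `Φ` denotes the deterministic free
energy `Φ_p(λ,h) = lim (1/n) log Z^n_{0,0}`. -/
theorem localized_region_nonempty
    (d : ℕ) (hd : 1 ≤ d) (lam h p : ℝ) (hlam : 0 < lam)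
    (hp : p ∈ Set.Ioc (0:ℝ) 1)
    (hh : h < 1 - (2 * d - (1 - p)) * Real.log 2 / (p * lam))
    {Ω : Type*} [MeasurableSpace Ω] (μ : MeasureTheory.Measure Ω) [MeasureTheory.IsProbabilityMeasure μ]
    (om et : ℤ → Ω → ℝ)
    (hom_meas : ∀ i, Measurable (om i)) (het_meas : ∀ i, Measurable (et i))
    (hom_val : ∀ i a, om i a = 1 ∨ om i a = -1)
    (het_val : ∀ i a, et i a = 1 ∨ et i a = -1)
    (hom_dist : ∀ i, μ {a | om i a = 1} = ENNReal.ofReal (1/2))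
    (het_dist : ∀ i, μ {a | et i a = 1} = ENNReal.ofReal p)
    (hindep : ProbabilityTheory.iIndepFun
      (Sum.elim om et) μ)
    (Φ : ℝ)
    (hΦ : ∀ᵐ a ∂μ, Tendsto
      (fun n : ℕ => (1 / n : ℝ) * Real.log (Z d lam h (fun i => om i a) (fun i => et i a) 0 0 n))
      atTop (nhds Φ)) :
    lam * h < Φ :=
  localized_region_nonempty_general d hd lam h p hlam hp hh μ om et hom_meas het_meas hom_val
    hom_dist het_dist hindep Φ hΦ

end Hetero
end

section
/- Fix p ∈ (0,1], λ > 0 and h < 1 with Φ_p(λ,h) = λh (delocalization). Then for all δ, ε ≥ 0 with ε ≥ δ(1 − h)/λ one also has Φ_p(λ + δ, h + ε) = (λ + δ)(h + ε), i.e. (λ + δ, h + ε) is delocalized. -/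
/- A heteropolymer in a medium with random droplets (Wüthrich, Ann. Appl. Probab. 2006).

A path in `C^{k+m}_{k,x}` is encoded by its sequence of `m` increments: at each step every
one of the `d` coordinates changes by `±1`, so an increment is an element of `Fin d → Bool`
(`true` = `+1`, `false` = `-1`).  The uniform measure on paths corresponds to the uniform
measure on step sequences, so expectations under `P^{k+m}_{k,x}` are normalized sums over
all step sequences. -/

open MeasureTheory Filter Real

/-
Upper bound. Passing from `(λ, h)` to `(λ + δ, h + ε)` raises the energy of every path by at most
`δ ∑ ω_j + (λε + δh + δε) n`: this is an equality at each step not spent in a droplet, and at a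
droplet visit it is exactly the condition `λε ≥ δ(1 - h)`. Since `∑_{j ≤ n} ω_j = o(n)` by the
strong law of large numbers, `Φ(λ + δ, h + ε) ≤ Φ(λ, h) + λε + δh + δε = (λ + δ)(h + ε)`.

Lower bound, valid at all parameters: by Jensen, `log Z` is at least the average energy, which
falls short of `λ(hn + ∑ ω_j)` by at most `2λ(1 + |h|)` times the expected number of returns of
the walk to the origin. That is `o(n)`, because the first coordinate is a simple random walk and
`P[S_j = 0] = C(j, j/2) 2^{-j} ≤ √(2/j)`.
-/

namespace Hetero

open Finset Topology ProbabilityTheory Function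

/-- `P[S_j = 0]` for the one-dimensional simple random walk `(S_j)`. -/
noncomputable def balancedProb (j : ℕ) : ℝ :=
  (#{u : Fin j → Bool | ∑ i, (if u i then (1 : ℤ) else -1) = 0} : ℝ) / 2 ^ j

lemma sum_sign_eq {j : ℕ} (u : Fin j → Bool) :
    ∑ i, (if u i then (1 : ℤ) else -1) = 2 * #{i | u i} - j := by
  have hsign : ∀ i, (if u i then (1 : ℤ) else -1) = 2 * (if u i then 1 else 0) - 1 := by
    intro i; cases u i <;> simp
  rw [Finset.sum_congr rfl fun i _ => hsign i, Finset.sum_sub_distrib, ← Finset.mul_sum,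
    Finset.sum_boole]
  simp

lemma card_filter_card_true_eq_choose (N t : ℕ) :
    #{u : Fin N → Bool | #{i | u i} = t} = N.choose t := by
  rw [show N.choose t = #(powersetCard t (univ : Finset (Fin N))) by simp]
  refine Finset.card_bij' (fun u _ => univ.filter (u ·)) (fun s _ i => decide (i ∈ s)) ?_ ?_ ?_ ?_
  · intro u hu
    simpa [Finset.mem_powersetCard] using hu
  · intro s hs
    simpa using (Finset.mem_powersetCard.1 hs).2
  · intro u _; funext i; simp
  · intro s _; ext i; simp

lemma balancedProb_two_mul (m : ℕ) : balancedProb (2 * m) = m.centralBinom / 4 ^ m := by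
  have hcard : #{u : Fin (2 * m) → Bool | ∑ i, (if u i then (1 : ℤ) else -1) = 0}
      = m.centralBinom := by
    rw [Nat.centralBinom, ← card_filter_card_true_eq_choose]
    congr 1
    refine Finset.filter_congr fun u _ => ?_
    rw [sum_sign_eq]
    omega
  rw [balancedProb, hcard, pow_mul]
  norm_num

lemma balancedProb_of_odd {j : ℕ} (hj : Odd j) : balancedProb j = 0 := by
  have hcard : #{u : Fin j → Bool | ∑ i, (if u i then (1 : ℤ) else -1) = 0} = 0 := by
    refine Finset.card_eq_zero.2 (Finset.filter_eq_empty_iff.2 fun u _ => ?_)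
    obtain ⟨k, rfl⟩ := hj
    rw [sum_sign_eq]
    omega
  simp [balancedProb, hcard]

lemma sq_centralBinom_div_four_pow_le (m : ℕ) :
    ((m.centralBinom : ℝ) / 4 ^ m) ^ 2 ≤ 1 / (m + 1) := by
  induction m with
  | zero => simp
  | succ m ih =>
    have hrec : ((m : ℝ) + 1) * (m + 1).centralBinom = 2 * (2 * m + 1) * m.centralBinom := by
      exact_mod_cast Nat.succ_mul_centralBinom_succ m
    have h4 : (0 : ℝ) < 4 ^ m := by positivity
    rw [div_pow, div_le_div_iff₀ (by positivity) (by positivity)] at ih ⊢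
    have hcoef : (2 * (2 * (m : ℝ) + 1)) ^ 2 * (m + 2) ≤ 16 * (m + 1) ^ 3 := by
      nlinarith [sq_nonneg (m : ℝ)]
    have hsq : ((m : ℝ) + 1) ^ 2 * ((m + 1).centralBinom : ℝ) ^ 2
        = (2 * (2 * m + 1)) ^ 2 * (m.centralBinom : ℝ) ^ 2 := by
      rw [← mul_pow, hrec, mul_pow]
    have h16 : ((4 : ℝ) ^ (m + 1)) ^ 2 = 16 * (4 ^ m) ^ 2 := by ring
    push_cast
    nlinarith [mul_le_mul_of_nonneg_left ih (by positivity : (0 : ℝ) ≤ (2 * (2 * m + 1)) ^ 2),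
      mul_le_mul_of_nonneg_right hcoef (by positivity : (0 : ℝ) ≤ ((4 : ℝ) ^ m) ^ 2),
      mul_pos (by positivity : (0 : ℝ) < m + 1) (by positivity : (0 : ℝ) < ((m : ℝ) + 1) ^ 2)]

lemma balancedProb_nonneg (j : ℕ) : 0 ≤ balancedProb j := by
  unfold balancedProb; positivity

lemma sq_balancedProb_le {j : ℕ} (hj : 1 ≤ j) : balancedProb j ^ 2 ≤ 2 / j := by
  rcases Nat.even_or_odd' j with ⟨m, rfl | rfl⟩
  · rw [balancedProb_two_mul]
    refine (sq_centralBinom_div_four_pow_le m).trans ?_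
    rw [div_le_div_iff₀ (by positivity) (by positivity)]
    push_cast
    linarith
  · rw [balancedProb_of_odd (odd_two_mul_add_one m), zero_pow two_ne_zero]
    positivity

lemma tendsto_balancedProb : Tendsto balancedProb atTop (𝓝 0) := by
  have hsqrt : Tendsto (fun j : ℕ => √(2 / j)) atTop (𝓝 0) := by
    simpa using (tendsto_const_div_atTop_nhds_zero_nat 2).sqrt
  refine tendsto_of_tendsto_of_tendsto_of_le_of_le' tendsto_const_nhds hsqrt
    (.of_forall balancedProb_nonneg) ?_
  filter_upwards [eventually_ge_atTop 1] with j hj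
  exact Real.le_sqrt_of_sq_le (sq_balancedProb_le hj)

lemma tendsto_sum_balancedProb_div :
    Tendsto (fun n : ℕ => (∑ j ∈ Icc 1 n, balancedProb j) / n) atTop (𝓝 0) := by
  have hshift : Tendsto (fun i : ℕ => balancedProb (i + 1)) atTop (𝓝 0) :=
    tendsto_balancedProb.comp (tendsto_add_atTop_nat 1)
  refine hshift.cesaro.congr fun n => ?_
  rw [← Finset.Ico_add_one_right_eq_Icc, Finset.sum_Ico_eq_sum_range, div_eq_inv_mul]
  simp [add_comm]

section Walk

variable (d : ℕ)

def stepsSplitEquiv {n j : ℕ} (hd : 0 < d) (hj : j ≤ n) :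
    Steps d n ≃ (Fin j → Bool) × (Fin j → {c : Fin d // c ≠ ⟨0, hd⟩} → Bool) ×
      ({i : Fin n // ¬ (i : ℕ) < j} → Fin d → Bool) where
  toFun s := (fun i => s (Fin.castLE hj i) ⟨0, hd⟩, fun i c => s (Fin.castLE hj i) c,
    fun i => s i)
  invFun p i c :=
    if hi : (i : ℕ) < j then
      if hc : c = ⟨0, hd⟩ then p.1 ⟨i, hi⟩ else p.2.1 ⟨i, hi⟩ ⟨c, hc⟩
    else p.2.2 ⟨i, hi⟩ c
  left_inv s := by
    funext i c
    by_cases hi : (i : ℕ) < j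
    · by_cases hc : c = ⟨0, hd⟩
      · subst hc; simp [hi, Fin.castLE]
      · simp [hi, hc, Fin.castLE]
    · simp [hi]
  right_inv p := by
    refine Prod.ext ?_ (Prod.ext ?_ ?_) <;> funext i
    · simp [Fin.castLE]
    · funext c; simp [Fin.castLE, c.2]
    · simp [i.2]

lemma sum_comp_firstCoord {n j : ℕ} (hd : 0 < d) (hj : j ≤ n) (g : (Fin j → Bool) → ℝ) :
    2 ^ j * ∑ s : Steps d n, g (fun i => s (Fin.castLE hj i) ⟨0, hd⟩)
      = 2 ^ (d * n) * ∑ u : Fin j → Bool, g u := by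
  set e := stepsSplitEquiv d hd hj
  have hcard : (2 : ℝ) ^ (d * n) = 2 ^ j * Fintype.card
      ((Fin j → {c : Fin d // c ≠ ⟨0, hd⟩} → Bool) ×
        ({i : Fin n // ¬ (i : ℕ) < j} → Fin d → Bool)) := by
    have hsteps : (2 : ℝ) ^ (d * n) = Fintype.card (Steps d n) := by simp [pow_mul]
    rw [hsteps, Fintype.card_congr e, Fintype.card_prod]
    simp
  rw [Fintype.sum_equiv e (fun s => g fun i => s (Fin.castLE hj i) ⟨0, hd⟩) (fun p => g p.1)
    fun _ => rfl, Fintype.sum_prod_type]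
  simp only [Finset.sum_const, Finset.card_univ, nsmul_eq_mul]
  rw [← Finset.mul_sum, hcard]
  ring

lemma pos_zero_apply {n j : ℕ} (hj : j ≤ n) (s : Steps d n) (c : Fin d) :
    pos d 0 s j c = ∑ i : Fin j, if s (Fin.castLE hj i) c then 1 else -1 := by
  rw [pos, Pi.zero_apply, zero_add, ← Fin.sum_univ_eq_sum_range]
  exact Finset.sum_congr rfl fun i _ => dif_pos (i.isLt.trans_le hj)

lemma sum_pos_eq_zero_le {n j : ℕ} (hd : 0 < d) (hj : j ≤ n) :
    ∑ s : Steps d n, (if pos d 0 s j = 0 then (1 : ℝ) else 0) ≤ 2 ^ (d * n) * balancedProb j := by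
  let balanced (u : Fin j → Bool) : ℝ :=
    if ∑ i, (if u i then (1 : ℤ) else -1) = 0 then 1 else 0
  have hle : ∀ s : Steps d n, (if pos d 0 s j = 0 then (1 : ℝ) else 0)
      ≤ balanced fun i => s (Fin.castLE hj i) ⟨0, hd⟩ := by
    intro s
    by_cases hs : pos d 0 s j = 0
    · have hfirst := congrFun hs ⟨0, hd⟩
      rw [pos_zero_apply d hj] at hfirst
      simp [balanced, hs, hfirst]
    · simp only [balanced, hs, if_false]
      split_ifs <;> norm_num
  calc ∑ s : Steps d n, (if pos d 0 s j = 0 then (1 : ℝ) else 0)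
      ≤ ∑ s : Steps d n, balanced fun i => s (Fin.castLE hj i) ⟨0, hd⟩ :=
        Finset.sum_le_sum fun s _ => hle s
    _ = 2 ^ (d * n) * (∑ u, balanced u) / 2 ^ j := by
        rw [eq_div_iff (by positivity), mul_comm, sum_comp_firstCoord d hd hj]
    _ = 2 ^ (d * n) * balancedProb j := by
        rw [Finset.sum_boole, balancedProb, mul_div_assoc]

lemma sum_Nret_le {n : ℕ} (hd : 0 < d) :
    ∑ s : Steps d n, (Nret d n s : ℝ) ≤ 2 ^ (d * n) * ∑ j ∈ Icc 1 n, balancedProb j := by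
  simp only [Nret, Finset.natCast_card_filter]
  rw [Finset.sum_comm, Finset.mul_sum]
  exact Finset.sum_le_sum fun j hj => sum_pos_eq_zero_le d hd (Finset.mem_Icc.1 hj).2

end Walk

lemma exp_sum_div_card_le {ι : Type*} [Fintype ι] [Nonempty ι] (f : ι → ℝ) :
    exp ((∑ i, f i) / Fintype.card ι) ≤ (∑ i, exp (f i)) / Fintype.card ι := by
  have hcard : (0 : ℝ) < Fintype.card ι := by exact_mod_cast Fintype.card_pos
  have hjensen := convexOn_exp.map_sum_le (t := univ) (w := fun _ => (Fintype.card ι : ℝ)⁻¹)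
    (p := f) (fun _ _ => by positivity) (by simp [hcard.ne']) (fun _ _ => Set.mem_univ _)
  rw [Finset.sum_div, Finset.sum_div]
  simpa only [smul_eq_mul, inv_mul_eq_div] using hjensen

section Energy

variable (d : ℕ)

lemma del_eq_neg_one_or_one (et : ℤ → ℝ) (t : ℤ) (y : Fin d → ℤ) :
    del d et t y = -1 ∨ del d et t y = 1 := by
  unfold del; split_ifs <;> simp

lemma Z_pos (lam h : ℝ) (om et : ℤ → ℝ) (k : ℤ) (x : Fin d → ℤ) (n : ℕ) :
    0 < Z d lam h om et k x n :=
  div_pos (Finset.sum_pos (fun _ _ => exp_pos _) univ_nonempty) (by positivity)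

variable {d} {lam h : ℝ} {om et : ℤ → ℝ}

lemma ham_add_le {δ ε : ℝ} (hδ : 0 ≤ δ) (hε : 0 ≤ ε) (hcond : δ * (1 - h) ≤ lam * ε)
    (hom : ∀ i, -1 ≤ om i) (k : ℤ) (x : Fin d → ℤ) {n : ℕ} (s : Steps d n) :
    ham d (lam + δ) (h + ε) om et k x s ≤ ham d lam h om et k x s
      + δ * ∑ j ∈ Icc 1 n, om (k + j) + (lam * ε + δ * h + δ * ε) * n := by
  set D := fun j : ℕ => del d et (k + j) (pos d x s j)
  calc ham d (lam + δ) (h + ε) om et k x s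
      = ∑ j ∈ Icc 1 n, (lam + δ) * (D j * (om (k + j) + (h + ε))) := Finset.mul_sum _ _ _
    _ ≤ ∑ j ∈ Icc 1 n, (lam * (D j * (om (k + j) + h))
          + (δ * om (k + j) + (lam * ε + δ * h + δ * ε))) := by
        refine Finset.sum_le_sum fun j _ => ?_
        have hω := hom (k + j)
        rcases del_eq_neg_one_or_one d et (k + j) (pos d x s j) with hD | hD <;>
          simp only [D, hD] <;> nlinarith
    _ = _ := by
        rw [Finset.sum_add_distrib, Finset.sum_add_distrib, ← Finset.mul_sum, ← Finset.mul_sum,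
          Finset.sum_const, Nat.card_Icc, nsmul_eq_mul, add_tsub_cancel_right]
        simp only [ham, D]
        ring

lemma Z_add_le {δ ε : ℝ} (hδ : 0 ≤ δ) (hε : 0 ≤ ε) (hcond : δ * (1 - h) ≤ lam * ε)
    (hom : ∀ i, -1 ≤ om i) (k : ℤ) (x : Fin d → ℤ) (n : ℕ) :
    Z d (lam + δ) (h + ε) om et k x n ≤
      exp (δ * ∑ j ∈ Icc 1 n, om (k + j) + (lam * ε + δ * h + δ * ε) * n)
        * Z d lam h om et k x n := by
  rw [Z, Z, ← mul_div_assoc, Finset.mul_sum]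
  gcongr with s
  rw [← exp_add]
  exact exp_le_exp.2 ((ham_add_le hδ hε hcond hom k x s).trans_eq (by ring))

lemma ham_ge_sub_Nret (hlam : 0 ≤ lam) (hom : ∀ i, |om i| ≤ 1) (k : ℤ) {n : ℕ}
    (s : Steps d n) :
    lam * (h * n + ∑ j ∈ Icc 1 n, om (k + j)) - 2 * lam * (1 + |h|) * Nret d n s
      ≤ ham d lam h om et k 0 s := by
  calc lam * (h * n + ∑ j ∈ Icc 1 n, om (k + j)) - 2 * lam * (1 + |h|) * Nret d n s
      = ∑ j ∈ Icc 1 n, (lam * (om (k + j) + h)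
          - 2 * lam * (1 + |h|) * if pos d 0 s j = 0 then 1 else 0) := by
        rw [Nret, Finset.natCast_card_filter, Finset.sum_sub_distrib, ← Finset.mul_sum,
          ← Finset.mul_sum, Finset.sum_add_distrib, Finset.sum_const, Nat.card_Icc,
          nsmul_eq_mul, add_tsub_cancel_right]
        ring
    _ ≤ ham d lam h om et k 0 s := by
        rw [ham, Finset.mul_sum]
        refine Finset.sum_le_sum fun j _ => ?_
        have hω := abs_le.1 (hom (k + j))
        have hh := le_abs_self h
        by_cases hret : pos d 0 s j = 0
        · rcases del_eq_neg_one_or_one d et (k + j) (pos d 0 s j) with hD | hD <;>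
            rw [hD, if_pos hret] <;> nlinarith [abs_nonneg h]
        · have hD : del d et (k + j) (pos d 0 s j) = 1 := if_neg fun hx => hret hx.1
          simp [hD, hret]

lemma le_log_Z (hd : 0 < d) (hlam : 0 ≤ lam) (hom : ∀ i, |om i| ≤ 1) (k : ℤ) (n : ℕ) :
    lam * (h * n + ∑ j ∈ Icc 1 n, om (k + j)) - 2 * lam * (1 + |h|) * ∑ j ∈ Icc 1 n, balancedProb j
      ≤ log (Z d lam h om et k 0 n) := by
  set A := lam * (h * n + ∑ j ∈ Icc 1 n, om (k + j))
  set K := 2 * lam * (1 + |h|)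
  have hK : 0 ≤ K := by positivity
  have hcard : (Fintype.card (Steps d n) : ℝ) = 2 ^ (d * n) := by simp [pow_mul]
  have havg : A - K * ∑ j ∈ Icc 1 n, balancedProb j
      ≤ (∑ s : Steps d n, ham d lam h om et k 0 s) / 2 ^ (d * n) := by
    rw [le_div_iff₀ (by positivity)]
    calc (A - K * ∑ j ∈ Icc 1 n, balancedProb j) * 2 ^ (d * n)
        = A * 2 ^ (d * n) - K * (2 ^ (d * n) * ∑ j ∈ Icc 1 n, balancedProb j) := by ring
      _ ≤ A * 2 ^ (d * n) - K * ∑ s : Steps d n, (Nret d n s : ℝ) := by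
          gcongr; exact sum_Nret_le d hd
      _ = ∑ s : Steps d n, (A - K * Nret d n s) := by
          rw [Finset.sum_sub_distrib, Finset.sum_const, Finset.card_univ, nsmul_eq_mul, hcard,
            ← Finset.mul_sum]
          ring
      _ ≤ ∑ s : Steps d n, ham d lam h om et k 0 s :=
          Finset.sum_le_sum fun s _ => ham_ge_sub_Nret hlam hom k s
  rw [le_log_iff_exp_le (Z_pos d lam h om et k 0 n)]
  calc exp (A - K * ∑ j ∈ Icc 1 n, balancedProb j)
      ≤ exp ((∑ s : Steps d n, ham d lam h om et k 0 s) / 2 ^ (d * n)) := exp_le_exp.2 havg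
    _ ≤ Z d lam h om et k 0 n := by
        rw [Z, ← hcard]
        exact exp_sum_div_card_le fun s => ham d lam h om et k 0 s

lemma mul_le_of_tendsto_log_Z (hd : 0 < d) (hlam : 0 ≤ lam) (hom : ∀ i, |om i| ≤ 1)
    (hS : Tendsto (fun n : ℕ => (∑ j ∈ Icc 1 n, om j) / n) atTop (𝓝 0)) {φ : ℝ}
    (hφ : Tendsto (fun n : ℕ => (1 / n : ℝ) * log (Z d lam h om et 0 0 n)) atTop (𝓝 φ)) :
    lam * h ≤ φ := by
  set K := 2 * lam * (1 + |h|)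
  have hlim : Tendsto (fun n : ℕ => lam * h + lam * ((∑ j ∈ Icc 1 n, om j) / n)
      - K * ((∑ j ∈ Icc 1 n, balancedProb j) / n)) atTop (𝓝 (lam * h + lam * 0 - K * 0)) :=
    (tendsto_const_nhds.add (hS.const_mul lam)).sub (tendsto_sum_balancedProb_div.const_mul K)
  refine le_of_tendsto_of_tendsto (by simpa using hlim) hφ ?_
  filter_upwards [eventually_ge_atTop 1] with n hn
  have hn : (0 : ℝ) < n := by exact_mod_cast hn
  have hlog := le_log_Z (et := et) (h := h) hd hlam hom 0 n
  simp only [zero_add] at hlog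
  calc _ = (1 / n : ℝ) *
        (lam * (h * n + ∑ j ∈ Icc 1 n, om j) - K * ∑ j ∈ Icc 1 n, balancedProb j) := by
        field_simp
    _ ≤ _ := by gcongr

lemma le_mul_of_tendsto_log_Z {δ ε : ℝ} (hδ : 0 ≤ δ) (hε : 0 ≤ ε) (hcond : δ * (1 - h) ≤ lam * ε)
    (hom : ∀ i, -1 ≤ om i) (hS : Tendsto (fun n : ℕ => (∑ j ∈ Icc 1 n, om j) / n) atTop (𝓝 0))
    (hφ₀ : Tendsto (fun n : ℕ => (1 / n : ℝ) * log (Z d lam h om et 0 0 n)) atTop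
      (𝓝 (lam * h))) {φ : ℝ}
    (hφ : Tendsto (fun n : ℕ => (1 / n : ℝ) * log (Z d (lam + δ) (h + ε) om et 0 0 n)) atTop
      (𝓝 φ)) :
    φ ≤ (lam + δ) * (h + ε) := by
  set c := lam * ε + δ * h + δ * ε
  have hlim : Tendsto (fun n : ℕ => δ * ((∑ j ∈ Icc 1 n, om j) / n) + c
      + (1 / n : ℝ) * log (Z d lam h om et 0 0 n)) atTop (𝓝 (δ * 0 + c + lam * h)) :=
    ((hS.const_mul δ).add_const c).add hφ₀
  refine le_of_tendsto_of_tendsto hφ (by convert hlim using 2; ring) ?_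
  filter_upwards [eventually_ge_atTop 1] with n hn
  have hn : (0 : ℝ) < n := by exact_mod_cast hn
  have hZ := Z_add_le (et := et) (d := d) hδ hε hcond hom 0 0 n
  simp only [zero_add] at hZ
  have hlog := (log_le_log (Z_pos d _ _ om et 0 0 n) hZ).trans_eq
    (log_mul (exp_pos _).ne' (Z_pos d lam h om et 0 0 n).ne')
  rw [log_exp] at hlog
  calc (1 / n : ℝ) * log (Z d (lam + δ) (h + ε) om et 0 0 n)
      ≤ (1 / n : ℝ) * (δ * ∑ j ∈ Icc 1 n, om j + c * n + log (Z d lam h om et 0 0 n)) := by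
        gcongr
    _ = _ := by field_simp

end Energy

section RademacherLLN

variable {Ω : Type*}

open scoped Classical in
lemma preimage_eq_ite_of_eq_one_or_neg_one {f : Ω → ℝ} (hf : ∀ a, f a = 1 ∨ f a = -1)
    (s : Set ℝ) :
    f ⁻¹' s = if (1 : ℝ) ∈ s then (if (-1 : ℝ) ∈ s then Set.univ else {a | f a = 1})
      else (if (-1 : ℝ) ∈ s then {a | f a = 1}ᶜ else ∅) := by
  have hne : (-1 : ℝ) ≠ 1 := by norm_num
  ext a
  rcases hf a with ha | ha <;> split_ifs <;> simp_all

variable [MeasurableSpace Ω] {μ : Measure Ω}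

lemma identDistrib_of_eq_one_or_neg_one [IsFiniteMeasure μ] {f g : Ω → ℝ}
    (hf : Measurable f) (hg : Measurable g)
    (hf_val : ∀ a, f a = 1 ∨ f a = -1) (hg_val : ∀ a, g a = 1 ∨ g a = -1)
    (hfg : μ {a | f a = 1} = μ {a | g a = 1}) : IdentDistrib f g μ μ := by
  refine ⟨hf.aemeasurable, hg.aemeasurable, Measure.ext fun s hs => ?_⟩
  rw [Measure.map_apply hf hs, Measure.map_apply hg hs,
    preimage_eq_ite_of_eq_one_or_neg_one hf_val, preimage_eq_ite_of_eq_one_or_neg_one hg_val]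
  have hf1 : MeasurableSet {a | f a = 1} := hf (measurableSet_singleton 1)
  have hg1 : MeasurableSet {a | g a = 1} := hg (measurableSet_singleton 1)
  split_ifs <;> simp [measure_compl hf1 (measure_ne_top μ _),
    measure_compl hg1 (measure_ne_top μ _), hfg]

lemma integral_eq_zero_of_eq_one_or_neg_one [IsProbabilityMeasure μ] {f : Ω → ℝ}
    (hf : Measurable f) (hf_val : ∀ a, f a = 1 ∨ f a = -1)
    (hf_half : μ {a | f a = 1} = ENNReal.ofReal (1 / 2)) : ∫ a, f a ∂μ = 0 := by
  have hneg : {a | -f a = 1} = {a | f a = 1}ᶜ := by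
    have hne : (-1 : ℝ) ≠ 1 := by norm_num
    ext a; rcases hf_val a with ha | ha <;> simp [ha, hne]
  have hsymm : IdentDistrib f (-f) μ μ := by
    refine identDistrib_of_eq_one_or_neg_one hf hf.neg hf_val (fun a => ?_) ?_
    · rcases hf_val a with ha | ha <;> simp [ha]
    · have hms : MeasurableSet {a | f a = 1} := hf (measurableSet_singleton 1)
      rw [Pi.neg_def, hneg, prob_compl_eq_one_sub hms, hf_half]
      rw [one_div, ENNReal.ofReal_inv_of_pos two_pos, ENNReal.ofReal_ofNat,
        ENNReal.one_sub_inv_two]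
  have := hsymm.integral_eq
  rw [integral_neg'] at this
  linarith

lemma ae_tendsto_sum_div_of_eq_one_or_neg_one [IsProbabilityMeasure μ] {om : ℤ → Ω → ℝ}
    (hmeas : ∀ i, Measurable (om i)) (hval : ∀ i a, om i a = 1 ∨ om i a = -1)
    (hhalf : ∀ i, μ {a | om i a = 1} = ENNReal.ofReal (1 / 2)) (hindep : iIndepFun om μ) :
    ∀ᵐ a ∂μ, Tendsto (fun n : ℕ => (∑ j ∈ Icc 1 n, om j a) / n) atTop (𝓝 0) := by
  set X : ℕ → Ω → ℝ := fun i => om (i + 1)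
  have hint : Integrable (X 0) μ :=
    (integrable_const (1 : ℝ)).mono' (hmeas _).aestronglyMeasurable
      (.of_forall fun a => by rcases hval 1 a with ha | ha <;> simp [X, ha])
  have hpair : Pairwise ((· ⟂ᵢ[μ] ·) on X) := fun i j hij =>
    hindep.indepFun (by simpa using hij)
  have hident : ∀ i, IdentDistrib (X i) (X 0) μ μ := fun i =>
    identDistrib_of_eq_one_or_neg_one (hmeas _) (hmeas _) (hval _) (hval _)
      ((hhalf _).trans (hhalf _).symm)
  have hmean : μ[X 0] = 0 := integral_eq_zero_of_eq_one_or_neg_one (hmeas _) (hval _) (hhalf _)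
  filter_upwards [strong_law_ae_real X hint hpair hident] with a ha
  rw [hmean] at ha
  refine ha.congr fun n => ?_
  rw [← Finset.Ico_add_one_right_eq_Icc, Finset.sum_Ico_eq_sum_range]
  simp [X, add_comm]

end RademacherLLN

theorem delocalization_monotone_general
    (d : ℕ) (hd : 1 ≤ d) (lam h : ℝ)
    (hlam : 0 < lam)
    {Ω : Type*} [MeasurableSpace Ω] (μ : MeasureTheory.Measure Ω) [MeasureTheory.IsProbabilityMeasure μ]
    (om et : ℤ → Ω → ℝ)
    (hom_meas : ∀ i, Measurable (om i))
    (hom_val : ∀ i a, om i a = 1 ∨ om i a = -1)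
    (hom_dist : ∀ i, μ {a | om i a = 1} = ENNReal.ofReal (1/2))
    (hindep : ProbabilityTheory.iIndepFun
      (Sum.elim om et) μ)
    (Φ : ℝ → ℝ → ℝ)
    (hΦ : ∀ lam h : ℝ, 0 ≤ lam → ∀ᵐ a ∂μ, Tendsto
      (fun n : ℕ => (1 / n : ℝ) * Real.log (Z d lam h (fun i => om i a) (fun i => et i a) 0 0 n))
      atTop (nhds (Φ lam h)))
    (hdeloc : Φ lam h = lam * h) :
    ∀ δ ε : ℝ, 0 ≤ δ → 0 ≤ ε → δ * (1 - h) / lam ≤ ε →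
      Φ (lam + δ) (h + ε) = (lam + δ) * (h + ε) := by
  intro δ ε hδ hε hle
  have hcond : δ * (1 - h) ≤ lam * ε := by rwa [div_le_iff₀ hlam, mul_comm ε] at hle
  have hlln := ae_tendsto_sum_div_of_eq_one_or_neg_one hom_meas hom_val hom_dist
    (hindep.precomp (g := Sum.inl) Sum.inl_injective)
  obtain ⟨a, ⟨hφ₀, hφ⟩, hS⟩ :=
    ((hΦ lam h hlam.le).and (hΦ (lam + δ) (h + ε) (by positivity))).and hlln |>.exists
  rw [hdeloc] at hφ₀
  have hom_abs : ∀ i, |om i a| ≤ 1 := fun i => by rcases hom_val i a with hi | hi <;> simp [hi]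
  exact le_antisymm
    (le_mul_of_tendsto_log_Z hδ hε hcond (fun i => (abs_le.1 (hom_abs i)).1) hS hφ₀ hφ)
    (mul_le_of_tendsto_log_Z hd (by positivity) hom_abs hS hφ)

/-- **Step 1 in the proof of Theorem 1.3.** Fix `p ∈ (0,1]`, `λ > 0` and `h < 1` with
`Φ_p(λ,h) = λh` (delocalization).  Then for all `δ, ε ≥ 0` with `ε ≥ δ(1-h)/λ`, also
`Φ_p(λ+δ, h+ε) = (λ+δ)(h+ε)`.  Here `Φ lam h` denotes the deterministic free energy
`Φ_p(λ,h) = lim (1/n) log Z^n_{0,0}` at interaction parameters `(lam, h)`. -/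
theorem delocalization_monotone
    (d : ℕ) (hd : 1 ≤ d) (p lam h : ℝ) (hp : p ∈ Set.Ioc (0:ℝ) 1)
    (hlam : 0 < lam) (hh : h < 1)
    {Ω : Type*} [MeasurableSpace Ω] (μ : MeasureTheory.Measure Ω) [MeasureTheory.IsProbabilityMeasure μ]
    (om et : ℤ → Ω → ℝ)
    (hom_meas : ∀ i, Measurable (om i)) (het_meas : ∀ i, Measurable (et i))
    (hom_val : ∀ i a, om i a = 1 ∨ om i a = -1)
    (het_val : ∀ i a, et i a = 1 ∨ et i a = -1)
    (hom_dist : ∀ i, μ {a | om i a = 1} = ENNReal.ofReal (1/2))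
    (het_dist : ∀ i, μ {a | et i a = 1} = ENNReal.ofReal p)
    (hindep : ProbabilityTheory.iIndepFun
      (Sum.elim om et) μ)
    (Φ : ℝ → ℝ → ℝ)
    (hΦ : ∀ lam h : ℝ, 0 ≤ lam → ∀ᵐ a ∂μ, Tendsto
      (fun n : ℕ => (1 / n : ℝ) * Real.log (Z d lam h (fun i => om i a) (fun i => et i a) 0 0 n))
      atTop (nhds (Φ lam h)))
    (hdeloc : Φ lam h = lam * h) :
    ∀ δ ε : ℝ, 0 ≤ δ → 0 ≤ ε → δ * (1 - h) / lam ≤ ε →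
      Φ (lam + δ) (h + ε) = (lam + δ) * (h + ε) :=
  delocalization_monotone_general d hd lam h hlam μ om et hom_meas hom_val hom_dist hindep Φ hΦ
    hdeloc

end Hetero
end

section
/- Assume d ≥ 3, λ > 0 and h > 1 − (1/(2λ)) log(1/(1 − α(d))). Then there exists a finite constant C (depending only on d, λ, h) such that for all n ≥ 1 and all realizations (ω,η), the expected number of returns to the origin under the polymer measure satisfies E_{Q^n_{0,0}}[N_n] ≤ C; in particular limsup_{n→∞} E_{Q^n_{0,0}}[N_n] < ∞. -/
/- A heteropolymer in a medium with random droplets (Wüthrich, Ann. Appl. Probab. 2006).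

A path in `C^{k+m}_{k,x}` is encoded by its sequence of `m` increments: at each step every
one of the `d` coordinates changes by `±1`, so an increment is an element of `Fin d → Bool`
(`true` = `+1`, `false` = `-1`).  The uniform measure on paths corresponds to the uniform
measure on step sequences, so expectations under `P^{k+m}_{k,x}` are normalized sums over
all step sequences. -/

open MeasureTheory Filter Real

/-! The energy of a path differs from the return-free value `λ ∑ⱼ (ωⱼ + h)` by at most
`μ = 2λ(1 - h)⁺` per return to the origin, and paths without returns attain that value exactly.
Hence `E_Q[N_n] ≤ E[N_n e^{μ N_n}] / P[N_n = 0]`. Cutting a path at its first return to the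
origin gives the renewal bound `P[N_n ≥ k] ≤ (1 - α)^k`, so the numerator is bounded by
`∑ₖ k ((1 - α) e^μ)^k`, which converges exactly under the hypothesis on `h`. For the
denominator, `P[N_n = 0] ≥ α ≥ 1/2` when `d ≥ 3`: by a union bound over return times,
`1 - α ≤ ∑ⱼ q_j^3` with `q_j = C(2j, j)/4^j` the one-dimensional return probability, and
`q_j^2 (2j + 2) ≤ 1` makes `q_j^3 ≤ q_j - q_{j+1}` telescope to `q_1 = 1/2`. -/

namespace Hetero

open Finset

theorem card_filter_append {α : Type*} [Fintype α] {t r : ℕ} {P : (Fin (t + r) → α) → Prop}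
    {p : (Fin t → α) → Prop} {q : (Fin r → α) → Prop}
    [DecidablePred P] [DecidablePred p] [DecidablePred q]
    (h : ∀ a b, P (Fin.append a b) ↔ p a ∧ q b) :
    #{s | P s} = #{a | p a} * #{b | q b} := by
  rw [← card_product, ← filter_product]
  refine card_equiv (Fin.appendEquiv t r).symm fun s => ?_
  conv_lhs => rw [← Fin.append_castAdd_natAdd (f := s)]
  simpa using h _ _

theorem sum_mul_pow_le_of_card_le {ι : Type*} [Fintype ι] (N : ι → ℕ) {c ρ x : ℝ}
    (hc : 0 ≤ c) (hρ : 0 ≤ ρ) (hx : 0 ≤ x) (hρx : ρ * x < 1)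
    (h : ∀ k, (#{i | k ≤ N i} : ℝ) ≤ c * ρ ^ k) :
    ∑ i, (N i : ℝ) * x ^ N i ≤ c * (ρ * x / (1 - ρ * x) ^ 2) := by
  have hgeom := hasSum_coe_mul_geometric_of_norm_lt_one
    (by rwa [Real.norm_eq_abs, abs_of_nonneg (mul_nonneg hρ hx)] : ‖ρ * x‖ < 1)
  calc ∑ i, (N i : ℝ) * x ^ N i
      = ∑ k ∈ univ.image N, #{i | N i = k} • ((k : ℝ) * x ^ k) :=
        sum_comp (fun k : ℕ => (k : ℝ) * x ^ k) N
    _ ≤ ∑ k ∈ univ.image N, c * (k * (ρ * x) ^ k) := by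
      refine sum_le_sum fun k _ => ?_
      have hk : (#{i | N i = k} : ℝ) ≤ c * ρ ^ k :=
        (Nat.cast_le.mpr (card_le_card (monotone_filter_right _ fun _ _ => Eq.ge))).trans (h k)
      calc #{i | N i = k} • ((k : ℝ) * x ^ k) ≤ c * ρ ^ k * (k * x ^ k) := by
            rw [nsmul_eq_mul]; gcongr
        _ = c * (k * (ρ * x) ^ k) := by ring
    _ ≤ c * (ρ * x / (1 - ρ * x) ^ 2) :=
      sum_le_hasSum _ (fun _ _ => by positivity) (hgeom.mul_left c)

theorem one_sub_mul_exp_lt_one {a lam h : ℝ} (ha : 0 < a) (ha' : a ≤ 1) (hlam : 0 < lam)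
    (hh : 1 - (1 / (2 * lam)) * Real.log (1 / (1 - a)) < h) :
    (1 - a) * Real.exp (max 0 (2 * lam * (1 - h))) < 1 := by
  rcases ha'.eq_or_lt with rfl | ha'
  · simp
  have hpos : 0 < 1 - a := by linarith
  have hlog : 0 < Real.log (1 / (1 - a)) :=
    Real.log_pos (by rw [lt_one_div one_pos hpos]; linarith)
  have hlt : 2 * lam * (1 - h) < Real.log (1 / (1 - a)) := by
    have : 1 - h < Real.log (1 / (1 - a)) / (2 * lam) := by
      rw [div_eq_inv_mul, ← one_div]; linarith
    rwa [lt_div_iff₀ (by positivity), mul_comm] at this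
  calc (1 - a) * Real.exp (max 0 (2 * lam * (1 - h)))
      < (1 - a) * Real.exp (Real.log (1 / (1 - a))) := by gcongr; exact max_lt hlog hlt
    _ = 1 := by rw [Real.exp_log (by positivity)]; field_simp

variable {d : ℕ}

theorem card_steps (m : ℕ) : Fintype.card (Steps d m) = 2 ^ (d * m) := by
  simp [pow_mul]

def incr {m : ℕ} (s : Steps d m) (i : ℕ) (c : Fin d) : ℤ :=
  if hi : i < m then (if s ⟨i, hi⟩ c then 1 else -1) else 0

theorem pos_apply (x : Fin d → ℤ) {m : ℕ} (s : Steps d m) (j : ℕ) (c : Fin d) :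
    pos d x s j c = x c + ∑ i ∈ range j, incr s i c := rfl

section Append

variable {t r : ℕ} (a : Steps d t) (b : Steps d r)

theorem incr_append_of_lt {i : ℕ} (hi : i < t) : incr (Fin.append a b) i = incr a i := by
  funext c
  simp [incr, hi, show i < t + r by omega, Fin.append, Fin.addCases]

theorem incr_append_add (i : ℕ) : incr (Fin.append a b) (t + i) = incr b i := by
  funext c
  by_cases hi : i < r
  · simp [incr, hi, Fin.append, Fin.addCases]
  · simp [incr, hi]

theorem pos_append_of_le (x : Fin d → ℤ) {j : ℕ} (hj : j ≤ t) :
    pos d x (Fin.append a b) j = pos d x a j := by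
  funext c
  simp only [pos_apply]
  congr 1
  refine sum_congr rfl fun i hi => ?_
  rw [incr_append_of_lt a b (by simp at hi; omega)]

theorem pos_append_add (x : Fin d → ℤ) (j : ℕ) :
    pos d x (Fin.append a b) (t + j) = pos d (pos d x a t) b j := by
  funext c
  simp only [pos_apply, sum_range_add, incr_append_add, add_assoc]
  congr 2
  exact sum_congr rfl fun i hi => by rw [incr_append_of_lt a b (by simpa using hi)]

end Append

def IsFirstReturn (t : ℕ) {m : ℕ} (s : Steps d m) : Prop :=
  pos d 0 s t = 0 ∧ ∀ i, 1 ≤ i → i < t → pos d 0 s i ≠ 0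

instance (t m : ℕ) : DecidablePred (IsFirstReturn (d := d) t (m := m)) :=
  fun _ => inferInstanceAs (Decidable (_ ∧ _))

theorem IsFirstReturn.eq {m t t' : ℕ} {s : Steps d m} (h : IsFirstReturn t s)
    (h' : IsFirstReturn t' s) (ht : 1 ≤ t) (ht' : 1 ≤ t') : t = t' := by
  by_contra hne
  rcases Nat.lt_or_gt_of_ne hne with hlt | hlt
  · exact h'.2 t ht hlt h.1
  · exact h.2 t' ht' hlt h'.1

theorem isFirstReturn_append_iff {t r : ℕ} (a : Steps d t) (b : Steps d r) :
    IsFirstReturn t (Fin.append a b) ↔ IsFirstReturn t a := by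
  refine and_congr (by rw [pos_append_of_le a b 0 le_rfl]) (forall_congr' fun i => ?_)
  exact imp_congr_right fun _ => imp_congr_right fun hi => by
    rw [pos_append_of_le a b 0 hi.le]

theorem exists_isFirstReturn {n : ℕ} {s : Steps d n} (h : Nret d n s ≠ 0) :
    ∃ t ∈ Icc 1 n, IsFirstReturn t s := by
  have hne : ((Icc 1 n).filter fun i => pos d 0 s i = 0).Nonempty := card_ne_zero.mp h
  obtain ⟨ht, ht0⟩ := mem_filter.mp (min'_mem _ hne)
  refine ⟨_, ht, ht0, fun i hi1 hit hi0 => ?_⟩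
  have hmem : i ∈ (Icc 1 n).filter fun i => pos d 0 s i = 0 :=
    mem_filter.mpr ⟨mem_Icc.mpr ⟨hi1, hit.le.trans (mem_Icc.mp ht).2⟩, hi0⟩
  exact absurd (min'_le _ i hmem) (not_le.mpr hit)

theorem Nret_eq_of_isFirstReturn {n t : ℕ} {s : Steps d n} (h : IsFirstReturn t s)
    (ht : 1 ≤ t) (htn : t ≤ n) :
    Nret d n s = #{i ∈ Icc (t + 1) n | pos d 0 s i = 0} + 1 := by
  have : (Icc 1 n).filter (fun i => pos d 0 s i = 0) =
      insert t ((Icc (t + 1) n).filter fun i => pos d 0 s i = 0) := by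
    ext i
    simp only [mem_filter, mem_Icc, mem_insert]
    constructor
    · rintro ⟨⟨hi1, hin⟩, hi0⟩
      rcases lt_trichotomy i t with hit | rfl | hti
      · exact absurd hi0 (h.2 i hi1 hit)
      · exact Or.inl rfl
      · exact Or.inr ⟨⟨hti, hin⟩, hi0⟩
    · rintro (rfl | ⟨⟨hti, hin⟩, hi0⟩)
      · exact ⟨⟨ht, htn⟩, h.1⟩
      · exact ⟨⟨by omega, hin⟩, hi0⟩
  rw [Nret, this, card_insert_of_notMem (by simp)]

theorem Nret_eq_zero_iff {n : ℕ} (s : Steps d n) :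
    Nret d n s = 0 ↔ ∀ i, 1 ≤ i → i ≤ n → pos d 0 s i ≠ 0 := by
  simp [Nret, filter_eq_empty_iff]

theorem card_returns_append {t r : ℕ} (a : Steps d t) (b : Steps d r)
    (ha : pos d 0 a t = 0) :
    #{i ∈ Icc (t + 1) (t + r) | pos d 0 (Fin.append a b) i = 0} = Nret d r b := by
  rw [← map_add_left_Icc, filter_map, card_map]
  unfold Nret
  congr 1
  refine filter_congr fun j _ => ?_
  simp [pos_append_add, ha]

theorem card_isFirstReturn_and {n t : ℕ} (ht : t ≤ n) (k : ℕ) :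
    #{s : Steps d n | IsFirstReturn t s ∧ k ≤ #{i ∈ Icc (t + 1) n | pos d 0 s i = 0}} =
      #{a : Steps d t | IsFirstReturn t a} * #{b : Steps d (n - t) | k ≤ Nret d (n - t) b} := by
  obtain ⟨r, rfl⟩ := Nat.exists_eq_add_of_le ht
  rw [Nat.add_sub_cancel_left]
  refine card_filter_append fun a b => ?_
  rw [isFirstReturn_append_iff]
  exact and_congr_right fun ha => by rw [card_returns_append a b ha.1]

theorem card_isFirstReturn {n t : ℕ} (ht : t ≤ n) :
    #{s : Steps d n | IsFirstReturn t s} =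
      #{a : Steps d t | IsFirstReturn t a} * 2 ^ (d * (n - t)) := by
  simpa [← card_steps] using card_isFirstReturn_and (d := d) ht 0

theorem Pprob_setOf {m : ℕ} (p : Steps d m → Prop) [DecidablePred p] :
    Pprob d m {s | p s} = #{s | p s} / 2 ^ (d * m) := by
  simp [Pprob, Set.indicator_apply, sum_boole]

theorem noReturn_eq (n : ℕ) :
    noReturn d n = #{s : Steps d n | Nret d n s = 0} / 2 ^ (d * n) := by
  simp only [noReturn, ← Nret_eq_zero_iff, Pprob_setOf]

theorem alpha_le_noReturn (n : ℕ) : alpha d ≤ noReturn d n :=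
  ciInf_le ⟨0, by rintro _ ⟨m, rfl⟩; simp only [noReturn_eq]; positivity⟩ n

theorem alpha_le_one : alpha d ≤ 1 := by
  refine (alpha_le_noReturn 0).trans ?_
  rw [noReturn_eq, div_le_one (by positivity)]
  exact_mod_cast (card_filter_le _ _).trans (card_univ.trans (card_steps 0)).le

theorem card_Nret_ne_zero (n : ℕ) :
    (#{s : Steps d n | Nret d n s ≠ 0} : ℝ) = (1 - noReturn d n) * 2 ^ (d * n) := by
  have := card_filter_add_card_filter_not (s := (univ : Finset (Steps d n)))
    (fun s => Nret d n s = 0)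
  rw [card_univ, card_steps] at this
  rw [noReturn_eq, sub_mul, div_mul_cancel₀ _ (by positivity), one_mul]
  exact eq_sub_of_add_eq' (by exact_mod_cast this)

theorem sum_card_isFirstReturn_le (n : ℕ) :
    ∑ t ∈ Icc 1 n, #{s : Steps d n | IsFirstReturn t s} ≤
      #{s : Steps d n | Nret d n s ≠ 0} := by
  rw [← card_biUnion]
  · refine card_le_card fun s hs => ?_
    obtain ⟨t, ht, hs⟩ := mem_biUnion.mp hs
    rw [mem_Icc] at ht
    simp [Nret_eq_of_isFirstReturn (mem_filter.mp hs).2 ht.1 ht.2]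
  · intro t ht t' ht' hne
    refine disjoint_filter.mpr fun s _ h h' => hne (h.eq h' ?_ ?_)
    · exact (mem_Icc.mp ht).1
    · exact (mem_Icc.mp ht').1

theorem sum_card_isFirstReturn_mul_le (n : ℕ) :
    ∑ t ∈ Icc 1 n, (#{a : Steps d t | IsFirstReturn t a} : ℝ) * 2 ^ (d * (n - t)) ≤
      (1 - alpha d) * 2 ^ (d * n) := calc
  _ = ((∑ t ∈ Icc 1 n, #{s : Steps d n | IsFirstReturn t s} : ℕ) : ℝ) := by
    push_cast
    exact sum_congr rfl fun t ht => by
      rw [card_isFirstReturn (mem_Icc.mp ht).2]; push_cast; rfl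
  _ ≤ #{s : Steps d n | Nret d n s ≠ 0} := by exact_mod_cast sum_card_isFirstReturn_le n
  _ ≤ (1 - alpha d) * 2 ^ (d * n) := by
    rw [card_Nret_ne_zero]
    gcongr
    exact alpha_le_noReturn n

theorem card_le_Nret_le (k n : ℕ) :
    (#{s : Steps d n | k ≤ Nret d n s} : ℝ) ≤ (1 - alpha d) ^ k * 2 ^ (d * n) := by
  induction k generalizing n with
  | zero =>
    have := card_filter_le (univ : Finset (Steps d n)) (fun s => 0 ≤ Nret d n s)
    rw [card_univ, card_steps] at this
    simpa using (Nat.cast_le (α := ℝ)).mpr this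
  | succ k ih =>
    have hsplit : #{s : Steps d n | k + 1 ≤ Nret d n s} ≤
        ∑ t ∈ Icc 1 n, #{s : Steps d n | IsFirstReturn t s ∧
          k ≤ #{i ∈ Icc (t + 1) n | pos d 0 s i = 0}} := by
      refine (card_le_card fun s hs => ?_).trans card_biUnion_le
      have hN := (mem_filter.mp hs).2
      obtain ⟨t, ht, hfr⟩ := exists_isFirstReturn (s := s) (by omega)
      rw [Nret_eq_of_isFirstReturn hfr (mem_Icc.mp ht).1 (mem_Icc.mp ht).2] at hN
      exact mem_biUnion.mpr ⟨t, ht, mem_filter.mpr ⟨mem_univ _, hfr, by omega⟩⟩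
    calc (#{s : Steps d n | k + 1 ≤ Nret d n s} : ℝ)
        ≤ ∑ t ∈ Icc 1 n, (#{a : Steps d t | IsFirstReturn t a} : ℝ) *
            #{b : Steps d (n - t) | k ≤ Nret d (n - t) b} := by
          refine (Nat.cast_le.mpr hsplit).trans_eq ?_
          push_cast
          exact sum_congr rfl fun t ht => by
            rw [card_isFirstReturn_and (mem_Icc.mp ht).2]; push_cast; rfl
      _ ≤ ∑ t ∈ Icc 1 n, (#{a : Steps d t | IsFirstReturn t a} : ℝ) *
            ((1 - alpha d) ^ k * 2 ^ (d * (n - t))) := by gcongr; exact ih _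
      _ = (1 - alpha d) ^ k *
            ∑ t ∈ Icc 1 n, (#{a : Steps d t | IsFirstReturn t a} : ℝ) *
              2 ^ (d * (n - t)) := by
          rw [mul_sum]; exact sum_congr rfl fun _ _ => by ring
      _ ≤ (1 - alpha d) ^ (k + 1) * 2 ^ (d * n) := by
          rw [pow_succ, mul_assoc]
          gcongr
          · exact pow_nonneg (sub_nonneg.mpr alpha_le_one) k
          · exact sum_card_isFirstReturn_mul_le n

def signSum {i : ℕ} (g : Fin i → Bool) : ℤ := ∑ l, if g l then 1 else -1

theorem signSum_eq_two_mul_card_sub {i : ℕ} (g : Fin i → Bool) :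
    signSum g = 2 * #{l | g l} - i := by
  have : ∀ l, (if g l then (1 : ℤ) else -1) = 2 * (if g l then 1 else 0) - 1 := fun l => by
    cases g l <;> norm_num
  rw [signSum, sum_congr rfl fun l _ => this l, sum_sub_distrib, ← mul_sum, sum_boole]
  simp

theorem card_filter_card_true_eq_choose_s14 (i k : ℕ) :
    #{g : Fin i → Bool | #{l | g l} = k} = i.choose k := by
  rw [show i.choose k = #(powersetCard k (univ : Finset (Fin i))) by simp]
  refine card_nbij' (fun g => ({l | g l} : Finset (Fin i))) (fun A l => decide (l ∈ A))
    ?_ ?_ ?_ ?_ <;> intro x hx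
  · simpa using hx
  · simpa using hx
  · funext l; simp
  · ext l; simp

theorem card_signSum_eq_zero_even (j : ℕ) :
    #{g : Fin (2 * j) → Bool | signSum g = 0} = j.centralBinom := by
  rw [Nat.centralBinom_eq_two_mul_choose, ← card_filter_card_true_eq_choose_s14]
  congr 1
  refine filter_congr fun g _ => ?_
  rw [signSum_eq_two_mul_card_sub]
  omega

theorem card_signSum_eq_zero_odd (j : ℕ) :
    #{g : Fin (2 * j + 1) → Bool | signSum g = 0} = 0 := by
  refine card_eq_zero.mpr (filter_eq_empty_iff.mpr fun g _ => ?_)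
  rw [signSum_eq_two_mul_card_sub]
  omega

theorem pos_self_apply {i : ℕ} (a : Steps d i) (c : Fin d) :
    pos d 0 a i c = signSum fun l => a l c := by
  simp [pos_apply, incr, signSum, sum_range]

theorem card_pos_self_eq_zero (i : ℕ) :
    #{a : Steps d i | pos d 0 a i = 0} = #{g : Fin i → Bool | signSum g = 0} ^ d := by
  rw [← Fintype.card_piFinset_const]
  refine card_equiv (Equiv.piComm _) fun a => ?_
  simp [funext_iff, pos_self_apply, Equiv.piComm]

theorem card_pos_eq_zero_of_le {i n : ℕ} (hi : i ≤ n) :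
    #{s : Steps d n | pos d 0 s i = 0} =
      #{a : Steps d i | pos d 0 a i = 0} * 2 ^ (d * (n - i)) := by
  obtain ⟨r, rfl⟩ := Nat.exists_eq_add_of_le hi
  rw [Nat.add_sub_cancel_left, show 2 ^ (d * r) = #{b : Steps d r | True} by simp [pow_mul]]
  exact card_filter_append fun a b => by simp [pos_append_of_le]

noncomputable def oneDimReturnProb (i : ℕ) : ℝ :=
  #{g : Fin i → Bool | signSum g = 0} / 2 ^ i

local notation "p₁" => oneDimReturnProb

theorem oneDimReturnProb_nonneg (i : ℕ) : 0 ≤ p₁ i := by unfold oneDimReturnProb; positivity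

theorem oneDimReturnProb_le_one (i : ℕ) : p₁ i ≤ 1 := by
  rw [oneDimReturnProb, div_le_one (by positivity)]
  exact_mod_cast (card_filter_le _ _).trans (by simp)

theorem oneDimReturnProb_two_mul (j : ℕ) : p₁ (2 * j) = j.centralBinom / 4 ^ j := by
  rw [oneDimReturnProb, card_signSum_eq_zero_even, pow_mul]
  norm_num

theorem oneDimReturnProb_two_mul_add_one (j : ℕ) : p₁ (2 * j + 1) = 0 := by
  simp [oneDimReturnProb, card_signSum_eq_zero_odd]

theorem oneDimReturnProb_two_mul_succ (j : ℕ) :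
    p₁ (2 * (j + 1)) * (2 * j + 2) = p₁ (2 * j) * (2 * j + 1) := by
  have h : ((j + 1 : ℕ) : ℝ) * (j + 1).centralBinom = 2 * (2 * j + 1) * j.centralBinom := by
    exact_mod_cast Nat.succ_mul_centralBinom_succ j
  rw [oneDimReturnProb_two_mul, oneDimReturnProb_two_mul, pow_succ]
  field_simp
  push_cast at h
  linear_combination 2 * h

theorem sq_oneDimReturnProb_two_mul_le {j : ℕ} (hj : 1 ≤ j) :
    p₁ (2 * j) ^ 2 * (2 * j + 2) ≤ 1 := by
  induction j, hj using Nat.le_induction with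
  | base => norm_num [oneDimReturnProb_two_mul 1, show Nat.centralBinom 1 = 2 from rfl]
  | succ j hj ih =>
    have hrec := oneDimReturnProb_two_mul_succ j
    have hpoly : (2 * j + 1 : ℝ) ^ 2 * (2 * j + 4) ≤ (2 * j + 2) ^ 3 := by nlinarith
    have hx : p₁ (2 * j) ^ 2 * (2 * j + 1) ^ 2 * (2 * j + 4) ≤ (2 * j + 2) ^ 2 := by
      refine le_of_mul_le_mul_right ?_ (by positivity : (0 : ℝ) < 2 * j + 2)
      nlinarith [mul_le_mul_of_nonneg_right ih
        (by positivity : (0 : ℝ) ≤ (2 * j + 1) ^ 2 * (2 * j + 4))]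
    push_cast
    refine le_of_mul_le_mul_right ?_ (by positivity : (0 : ℝ) < (2 * j + 2) ^ 2)
    linear_combination (2 * (j : ℝ) + 4) *
      (p₁ (2 * (j + 1)) * (2 * j + 2) + p₁ (2 * j) * (2 * j + 1)) * hrec + hx

-- Telescopes along `i ↦ p₁ (2 * ⌈i / 2⌉)`; the odd terms vanish.
theorem oneDimReturnProb_cube_le_sub {i : ℕ} (hi : 1 ≤ i) :
    p₁ i ^ 3 ≤ p₁ (2 * ((i + 1) / 2)) - p₁ (2 * ((i + 2) / 2)) := by
  obtain ⟨j, rfl | rfl⟩ := Nat.even_or_odd' i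
  · rw [show (2 * j + 1) / 2 = j by omega, show (2 * j + 2) / 2 = j + 1 by omega]
    have hsq := sq_oneDimReturnProb_two_mul_le (j := j) (by omega)
    have hrec := oneDimReturnProb_two_mul_succ j
    have hx := oneDimReturnProb_nonneg (2 * j)
    refine le_of_mul_le_mul_right ?_ (by positivity : (0 : ℝ) < 2 * j + 2)
    nlinarith [mul_le_mul_of_nonneg_left hsq hx]
  · rw [show (2 * j + 1 + 1) / 2 = j + 1 by omega, show (2 * j + 1 + 2) / 2 = j + 1 by omega,
      oneDimReturnProb_two_mul_add_one]
    simp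

theorem sum_oneDimReturnProb_cube_le (n : ℕ) :
    ∑ i ∈ Icc 1 n, p₁ i ^ 3 ≤ 1 / 2 - p₁ (2 * ((n + 2) / 2)) := by
  induction n with
  | zero => norm_num [oneDimReturnProb_two_mul 1, show Nat.centralBinom 1 = 2 from rfl]
  | succ n ih =>
    rw [sum_Icc_succ_top (by omega)]
    linarith [oneDimReturnProb_cube_le_sub (i := n + 1) (by omega)]

theorem card_pos_eq_zero_eq_oneDimReturnProb_pow {i n : ℕ} (hi : i ≤ n) :
    (#{s : Steps d n | pos d 0 s i = 0} : ℝ) = p₁ i ^ d * 2 ^ (d * n) := by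
  rw [card_pos_eq_zero_of_le hi, card_pos_self_eq_zero, oneDimReturnProb, div_pow, ← pow_mul,
    mul_comm i d]
  have : (2 : ℝ) ^ (d * n) = 2 ^ (d * i) * 2 ^ (d * (n - i)) := by
    rw [← pow_add, ← mul_add, Nat.add_sub_cancel' hi]
  rw [this]
  field_simp
  push_cast
  ring

theorem half_le_noReturn (hd : 3 ≤ d) (n : ℕ) : 1 / 2 ≤ noReturn d n := by
  have hunion : #{s : Steps d n | Nret d n s ≠ 0} ≤
      ∑ i ∈ Icc 1 n, #{s : Steps d n | pos d 0 s i = 0} := by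
    refine (card_le_card fun s hs => ?_).trans card_biUnion_le
    obtain ⟨t, ht, hfr⟩ := exists_isFirstReturn (mem_filter.mp hs).2
    exact mem_biUnion.mpr ⟨t, ht, mem_filter.mpr ⟨mem_univ _, hfr.1⟩⟩
  have hsum : (1 - noReturn d n) * 2 ^ (d * n) ≤ (1 / 2) * 2 ^ (d * n) := calc
    _ = (#{s : Steps d n | Nret d n s ≠ 0} : ℝ) := (card_Nret_ne_zero n).symm
    _ ≤ ∑ i ∈ Icc 1 n, p₁ i ^ d * 2 ^ (d * n) := by
      refine (Nat.cast_le.mpr hunion).trans_eq ?_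
      push_cast
      exact sum_congr rfl fun i hi =>
        card_pos_eq_zero_eq_oneDimReturnProb_pow (mem_Icc.mp hi).2
    _ ≤ ∑ i ∈ Icc 1 n, p₁ i ^ 3 * 2 ^ (d * n) := by
      refine sum_le_sum fun i _ => mul_le_mul_of_nonneg_right ?_ (by positivity)
      exact pow_le_pow_of_le_one (oneDimReturnProb_nonneg i) (oneDimReturnProb_le_one i) hd
    _ ≤ (1 / 2) * 2 ^ (d * n) := by
      rw [← sum_mul]
      gcongr
      linarith [sum_oneDimReturnProb_cube_le n, oneDimReturnProb_nonneg (2 * ((n + 2) / 2))]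
  linarith [le_of_mul_le_mul_right hsum (by positivity)]

theorem half_le_alpha (hd : 3 ≤ d) : 1 / 2 ≤ alpha d := le_ciInf (half_le_noReturn hd)

section Energy

variable {lam h : ℝ} {om et : ℤ → ℝ} {k : ℤ} {n : ℕ}

theorem ham_le (s : Steps d n) (hlam : 0 ≤ lam) (hom : ∀ i, -1 ≤ om i) :
    ham d lam h om et k 0 s ≤
      lam * ∑ j ∈ Icc 1 n, (om (k + j) + h) + Nret d n s * max 0 (2 * lam * (1 - h)) := by
  have hret : (Nret d n s : ℝ) * max 0 (2 * lam * (1 - h)) =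
      ∑ j ∈ Icc 1 n, if pos d 0 s j = 0 then max 0 (2 * lam * (1 - h)) else 0 := by
    rw [← sum_filter, sum_const, nsmul_eq_mul, Nret]
  rw [ham, hret, mul_sum, mul_sum, ← sum_add_distrib]
  refine sum_le_sum fun j _ => ?_
  have hμ := le_max_right 0 (2 * lam * (1 - h))
  have hω := hom (k + j)
  unfold del
  split_ifs with h₁ h₂ <;>
    first | exact absurd h₁.1 h₂ | nlinarith [le_max_left 0 (2 * lam * (1 - h))]

theorem ham_of_Nret_eq_zero {s : Steps d n} (hs : Nret d n s = 0) :
    ham d lam h om et k 0 s = lam * ∑ j ∈ Icc 1 n, (om (k + j) + h) := by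
  rw [ham]
  congr 1
  refine sum_congr rfl fun j hj => ?_
  have hj0 := (Nret_eq_zero_iff s).mp hs j (mem_Icc.mp hj).1 (mem_Icc.mp hj).2
  rw [del, if_neg fun h₀ => hj0 h₀.1, one_mul]

variable (n)

theorem alpha_mul_le_sum_exp_ham :
    Real.exp (lam * ∑ j ∈ Icc 1 n, (om (0 + j) + h)) * (alpha d * 2 ^ (d * n)) ≤
      ∑ s : Steps d n, Real.exp (ham d lam h om et 0 0 s) := calc
  _ ≤ Real.exp (lam * ∑ j ∈ Icc 1 n, (om (0 + j) + h)) *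
        #{s : Steps d n | Nret d n s = 0} := by
    gcongr
    have := alpha_le_noReturn (d := d) n
    rwa [noReturn_eq, le_div_iff₀ (by positivity)] at this
  _ = ∑ s : Steps d n with Nret d n s = 0,
        Real.exp (lam * ∑ j ∈ Icc 1 n, (om (0 + j) + h)) := by
    rw [sum_const, nsmul_eq_mul, mul_comm]
  _ = ∑ s : Steps d n with Nret d n s = 0, Real.exp (ham d lam h om et 0 0 s) :=
    sum_congr rfl fun s hs => by rw [ham_of_Nret_eq_zero (mem_filter.mp hs).2]
  _ ≤ _ := sum_le_sum_of_subset_of_nonneg (filter_subset _ _) fun _ _ _ => (Real.exp_pos _).le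

theorem sum_Nret_mul_exp_ham_le (hlam : 0 ≤ lam) (hom : ∀ i, -1 ≤ om i)
    (hB : (1 - alpha d) * Real.exp (max 0 (2 * lam * (1 - h))) < 1) :
    ∑ s : Steps d n, (Nret d n s : ℝ) * Real.exp (ham d lam h om et 0 0 s) ≤
      Real.exp (lam * ∑ j ∈ Icc 1 n, (om (0 + j) + h)) * (2 ^ (d * n) *
        ((1 - alpha d) * Real.exp (max 0 (2 * lam * (1 - h))) /
          (1 - (1 - alpha d) * Real.exp (max 0 (2 * lam * (1 - h)))) ^ 2)) := calc
  _ ≤ ∑ s : Steps d n, Real.exp (lam * ∑ j ∈ Icc 1 n, (om (0 + j) + h)) *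
        ((Nret d n s : ℝ) * Real.exp (max 0 (2 * lam * (1 - h))) ^ Nret d n s) := by
    refine sum_le_sum fun s _ => ?_
    rw [← Real.exp_nat_mul, mul_left_comm, ← Real.exp_add]
    gcongr
    exact ham_le s hlam hom
  _ ≤ _ := by
    rw [← mul_sum]
    gcongr
    refine sum_mul_pow_le_of_card_le _ (by positivity) (sub_nonneg.mpr alpha_le_one)
      (Real.exp_pos _).le hB fun k => ?_
    rw [mul_comm]
    exact card_le_Nret_le k n

end Energy

/-- **Proposition 3.3.** Assume `d ≥ 3`, `λ > 0` and `h > 1 - (1/(2λ)) log(1/(1-α(d)))`.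
Then there is a finite constant `C` (depending only on `d, λ, h`) such that for all
`n ≥ 1` and all realizations `(ω,η)`, `E_{Q^n_{0,0}}[N_n] ≤ C`; in particular
`limsup_{n→∞} E_{Q^n_{0,0}}[N_n] < ∞`. -/
theorem expected_returns_bounded
    (d : ℕ) (hd : 3 ≤ d) (lam h : ℝ) (hlam : 0 < lam)
    (hh : 1 - (1 / (2 * lam)) * Real.log (1 / (1 - alpha d)) < h) :
    ∃ C : ℝ, ∀ om et : ℤ → ℝ,
      (∀ i, om i = 1 ∨ om i = -1) → (∀ i, et i = 1 ∨ et i = -1) →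
      (∀ n : ℕ, 1 ≤ n →
        (∑ s : Steps d n, (Nret d n s : ℝ) * Real.exp (ham d lam h om et 0 0 s)) /
          (∑ s : Steps d n, Real.exp (ham d lam h om et 0 0 s)) ≤ C) ∧
      Filter.limsup (fun n : ℕ =>
        (∑ s : Steps d n, (Nret d n s : ℝ) * Real.exp (ham d lam h om et 0 0 s)) /
          (∑ s : Steps d n, Real.exp (ham d lam h om et 0 0 s))) atTop ≤ C := by
  set B := (1 - alpha d) * Real.exp (max 0 (2 * lam * (1 - h)))
  have hα : 0 < alpha d := by linarith [half_le_alpha hd]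
  have hB : B < 1 := one_sub_mul_exp_lt_one hα alpha_le_one hlam hh
  have hB0 : 0 ≤ B := mul_nonneg (sub_nonneg.mpr alpha_le_one) (Real.exp_pos _).le
  refine ⟨B / (1 - B) ^ 2 / alpha d, fun om et hom _ => ?_⟩
  have hom' : ∀ i, -1 ≤ om i := fun i => by rcases hom i with h | h <;> linarith
  have key : ∀ n : ℕ,
      (∑ s : Steps d n, (Nret d n s : ℝ) * Real.exp (ham d lam h om et 0 0 s)) /
        (∑ s : Steps d n, Real.exp (ham d lam h om et 0 0 s)) ≤ B / (1 - B) ^ 2 / alpha d := by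
    intro n
    rw [div_le_iff₀ (sum_pos (fun s _ => Real.exp_pos _) univ_nonempty)]
    set E := Real.exp (lam * ∑ j ∈ Icc 1 n, (om (0 + j) + h))
    calc _ ≤ E * (2 ^ (d * n) * (B / (1 - B) ^ 2)) := sum_Nret_mul_exp_ham_le n hlam.le hom' hB
      _ = B / (1 - B) ^ 2 / alpha d * (E * (alpha d * 2 ^ (d * n))) := by field_simp
      _ ≤ _ := by gcongr; exact alpha_mul_le_sum_exp_ham n
  refine ⟨fun n _ => key n, Filter.limsup_le_of_le ?_ (Filter.Eventually.of_forall key)⟩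
  exact Filter.isCoboundedUnder_le_of_le _ fun n => by positivity

end Hetero
end
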